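/- arXiv:2510.25983 — 7 statements merged into one kernel-verified Lean document; each statement's English description precedes it below -/
import Mathlib

section
/- For every integer K ≥ 2 and every measurable function r : X → (0,∞) for which the integral defining D_InfoNCE(r) exists, one has D_InfoNCE(r) ≤ log K and D_InfoNCE(r) ≤ KL(q1 ‖ q0); that is, D_InfoNCE(r) ≤ min(log K, KL(q1 ‖ q0)). -/
/-! The score `s_i(x) = r(x_i) / ((1/K) ∑_z r(x_z))` lies in `(0, K]`, whence the bound `log K`.
Under `q0^{⊗K}` the coordinates are exchangeable and `∑_i s_i = K`, so `E_{q0^{⊗K}}[s_0] = 1`.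
Reweighting the class measure by `dq0/dq1 (x_0) = exp (-llr (x_0))` gives a measure below
`q0^{⊗K}`, and `t ≤ e^t - 1` applied to `log s_0 - llr (x_0)` yields
`E[log s_0] - KL(q1 ‖ q0) ≤ E_{q0^{⊗K}}[s_0] - 1 = 0`. -/

open MeasureTheory
open scoped ENNReal Classical

/-- The class measure on `X^K` under which the `z`-th coordinate has law `q1` and the
remaining coordinates are i.i.d. with law `q0`, all independent. -/
noncomputable def classMeasure {X : Type*} [MeasurableSpace X]
    (q1 q0 : Measure X) (K : ℕ) (z : Fin K) : Measure (Fin K → X) :=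
  Measure.pi fun i => if i = z then q1 else q0

/-- Kullback--Leibler divergence, valued in the extended reals: it equals the integral of the
log-likelihood ratio when `μ ≪ ν` and the log-likelihood ratio is integrable, and `⊤` otherwise. -/
noncomputable def klDivE {X : Type*} [MeasurableSpace X] (μ ν : Measure X) : EReal :=
  if μ ≪ ν ∧ Integrable (llr μ ν) μ then ((∫ x, llr μ ν x ∂μ : ℝ) : EReal) else ⊤

open Real

section Variational

variable {Ω : Type*} [MeasurableSpace Ω] {μ ν : Measure Ω}

lemma withDensity_exp_neg_llr_le [SigmaFinite μ] [SigmaFinite ν] (hμν : μ ≪ ν) :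
    μ.withDensity (fun ω => ENNReal.ofReal (exp (-llr μ ν ω))) ≤ ν :=
  calc μ.withDensity (fun ω => ENNReal.ofReal (exp (-llr μ ν ω)))
      = μ.withDensity (fun ω => ENNReal.ofReal (ν.rnDeriv μ ω).toReal) :=
        withDensity_congr_ae <| (exp_neg_llr hμν).mono fun _ hω => congrArg ENNReal.ofReal hω
    _ ≤ μ.withDensity (ν.rnDeriv μ) :=
        withDensity_mono <| .of_forall fun _ => ENNReal.ofReal_toReal_le
    _ ≤ ν := Measure.withDensity_rnDeriv_le ν μ

/-- With `φ = llr μ ν` this is the Nguyen–Wainwright–Jordan variational bound on `KL(μ ‖ ν)`. -/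
lemma integral_le_integral_add_integral_exp_sub_one [IsProbabilityMeasure μ] {φ ψ : Ω → ℝ}
    (hφ : Measurable φ) (hψ : Measurable ψ) (hφμ : Integrable φ μ) (hψμ : Integrable ψ μ)
    (hψν : Integrable (fun ω => exp (ψ ω)) ν)
    (hle : μ.withDensity (fun ω => ENNReal.ofReal (exp (-φ ω))) ≤ ν) :
    ∫ ω, ψ ω ∂μ ≤ ∫ ω, φ ω ∂μ + (∫ ω, exp (ψ ω) ∂ν - 1) := by
  have hexp_sub : ∀ ω, ENNReal.ofReal (exp (ψ ω - φ ω))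
      = ENNReal.ofReal (exp (-φ ω)) * ENNReal.ofReal (exp (ψ ω)) := fun ω => by
    rw [← ENNReal.ofReal_mul (exp_pos _).le, ← exp_add, neg_add_eq_sub]
  have hlintegral : ∫⁻ ω, ENNReal.ofReal (exp (ψ ω - φ ω)) ∂μ
      ≤ ∫⁻ ω, ENNReal.ofReal (exp (ψ ω)) ∂ν := by
    calc ∫⁻ ω, ENNReal.ofReal (exp (ψ ω - φ ω)) ∂μ
        = ∫⁻ ω, ENNReal.ofReal (exp (ψ ω))
            ∂μ.withDensity (fun ω => ENNReal.ofReal (exp (-φ ω))) := by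
          rw [lintegral_withDensity_eq_lintegral_mul _ (by fun_prop) (by fun_prop)]
          exact lintegral_congr hexp_sub
      _ ≤ ∫⁻ ω, ENNReal.ofReal (exp (ψ ω)) ∂ν := lintegral_mono' hle le_rfl
  have hint : Integrable (fun ω => exp (ψ ω - φ ω)) μ := by
    rw [← lintegral_ofReal_ne_top_iff_integrable (by fun_prop)
      (.of_forall fun _ => (exp_pos _).le)]
    exact ne_top_of_le_ne_top ((lintegral_ofReal_ne_top_iff_integrable hψν.aestronglyMeasurable
      (.of_forall fun _ => (exp_pos _).le)).2 hψν) hlintegral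
  have hintegral : ∫ ω, exp (ψ ω - φ ω) ∂μ ≤ ∫ ω, exp (ψ ω) ∂ν := by
    rw [← ENNReal.ofReal_le_ofReal_iff (integral_nonneg fun _ => (exp_pos _).le),
      ofReal_integral_eq_lintegral_ofReal hint (.of_forall fun _ => (exp_pos _).le),
      ofReal_integral_eq_lintegral_ofReal hψν (.of_forall fun _ => (exp_pos _).le)]
    exact hlintegral
  calc ∫ ω, ψ ω ∂μ = ∫ ω, φ ω ∂μ + ∫ ω, ψ ω - φ ω ∂μ := by
        rw [integral_sub hψμ hφμ]; ring
    _ ≤ ∫ ω, φ ω ∂μ + ∫ ω, exp (ψ ω - φ ω) - 1 ∂μ := by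
        refine (add_le_add_iff_left _).2 <|
          integral_mono (hψμ.sub hφμ) (hint.sub (integrable_const 1))
            fun ω => by linarith [add_one_le_exp (ψ ω - φ ω)]
    _ ≤ ∫ ω, φ ω ∂μ + (∫ ω, exp (ψ ω) ∂ν - 1) := by
        rw [integral_sub hint (integrable_const 1), integral_const, probReal_univ, one_smul]
        linarith

end Variational

section Product

variable {X : Type*} [MeasurableSpace X]

lemma pi_withDensity_eval_le {n : ℕ} {μ : Fin (n + 1) → Measure X} [∀ i, SigmaFinite (μ i)]
    {ν : Measure X} [SigmaFinite ν] (i : Fin (n + 1)) {d : X → ℝ≥0∞} (hd : Measurable d)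
    (hle : (μ i).withDensity d ≤ ν) :
    (Measure.pi μ).withDensity (fun x => d (x i)) ≤ Measure.pi (Function.update μ i ν) := by
  set e := MeasurableEquiv.piFinSuccAbove (fun _ => X) i
  set R := Measure.pi fun j => μ (i.succAbove j)
  have hμ : Measure.pi μ = ((μ i).prod R).map e.symm :=
    (measurePreserving_piFinSuccAbove μ i).symm.map_eq.symm
  have : ∀ j, SigmaFinite (Function.update μ i ν j) := fun j => by
    rcases eq_or_ne j i with rfl | hj
    · rw [Function.update_self]; infer_instance
    · rw [Function.update_of_ne hj]; infer_instance
  have hν : Measure.pi (Function.update μ i ν) = (ν.prod R).map e.symm := by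
    have := (measurePreserving_piFinSuccAbove (Function.update μ i ν) i).symm.map_eq.symm
    simpa only [Function.update_self, Function.update_of_ne (Fin.succAbove_ne i _)] using this
  have hmap : (((μ i).prod R).map e.symm).withDensity (fun x => d (x i))
      = (((μ i).prod R).withDensity fun y => d y.1).map e.symm := by
    ext s hs
    rw [withDensity_apply _ hs, Measure.map_apply e.symm.measurable hs,
      withDensity_apply _ (e.symm.measurable hs), Measure.restrict_map e.symm.measurable hs,
      lintegral_map (f := fun x => d (x i)) (by fun_prop) e.symm.measurable]
    simp [e]
  rw [hμ, hν, hmap, ← prod_withDensity_left hd]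
  exact Measure.map_mono (Measure.prod_mono hle le_rfl) e.symm.measurable

end Product

section Score

variable {X : Type*} {K : ℕ} {r : X → ℝ}

noncomputable def infoNCEScore (K : ℕ) (r : X → ℝ) (i : Fin K) (x : Fin K → X) : ℝ :=
  r (x i) / ((K : ℝ)⁻¹ * ∑ z, r (x z))

lemma measurable_infoNCEScore [MeasurableSpace X] (hr : Measurable r) (i : Fin K) :
    Measurable (infoNCEScore K r i) := by
  unfold infoNCEScore; fun_prop

lemma infoNCEScore_pos (hr_pos : ∀ x, 0 < r x) (i : Fin K) (x : Fin K → X) :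
    0 < infoNCEScore K r i x := by
  have : 0 < (K : ℝ) := by exact_mod_cast i.pos
  have : 0 < ∑ z, r (x z) := Finset.sum_pos (fun z _ => hr_pos _) ⟨i, Finset.mem_univ i⟩
  exact div_pos (hr_pos _) (by positivity)

lemma infoNCEScore_le (hr_pos : ∀ x, 0 < r x) (i : Fin K) (x : Fin K → X) :
    infoNCEScore K r i x ≤ K := by
  have hK : 0 < (K : ℝ) := by exact_mod_cast i.pos
  have hsum : r (x i) ≤ ∑ z, r (x z) :=
    Finset.single_le_sum (fun z _ => (hr_pos (x z)).le) (Finset.mem_univ i)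
  have : 0 < ∑ z, r (x z) := (hr_pos _).trans_le hsum
  rw [infoNCEScore, div_le_iff₀ (by positivity), ← mul_assoc, mul_inv_cancel₀ hK.ne', one_mul]
  exact hsum

lemma sum_infoNCEScore (hr_pos : ∀ x, 0 < r x) (x : Fin K → X) :
    ∑ i, infoNCEScore K r i x = K := by
  rcases K.eq_zero_or_pos with rfl | hK
  · simp
  have : 0 < ∑ z, r (x z) := Finset.sum_pos (fun z _ => hr_pos _) ⟨⟨0, hK⟩, Finset.mem_univ _⟩
  simp only [infoNCEScore, ← Finset.sum_div]
  field_simp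

lemma integrable_infoNCEScore [MeasurableSpace X] (μ : Measure (Fin K → X)) [IsFiniteMeasure μ]
    (hr : Measurable r) (hr_pos : ∀ x, 0 < r x) (i : Fin K) :
    Integrable (infoNCEScore K r i) μ :=
  .of_bound (measurable_infoNCEScore hr i).aestronglyMeasurable K <| .of_forall fun x => by
    rw [Real.norm_of_nonneg (infoNCEScore_pos hr_pos i x).le]
    exact infoNCEScore_le hr_pos i x

lemma integral_infoNCEScore_pi_eq [MeasurableSpace X] (μ : Measure X) [SigmaFinite μ]
    (i j : Fin K) :
    ∫ x, infoNCEScore K r i x ∂(Measure.pi fun _ => μ)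
      = ∫ x, infoNCEScore K r j x ∂(Measure.pi fun _ => μ) := by
  set σ := Equiv.swap i j
  have hσ := measurePreserving_piCongrLeft (fun _ : Fin K => μ) σ
  rw [← hσ.integral_comp']
  congr 1 with x
  have hcoord : ∀ a, MeasurableEquiv.piCongrLeft (fun _ => X) σ x (σ a) = x a :=
    MeasurableEquiv.piCongrLeft_apply_apply (β := fun _ => X) σ x
  have hsum : ∑ z, r (MeasurableEquiv.piCongrLeft (fun _ => X) σ x z) = ∑ z, r (x z) := by
    rw [← Equiv.sum_comp σ (fun z => r (MeasurableEquiv.piCongrLeft (fun _ => X) σ x z))]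
    simp only [hcoord]
  rw [infoNCEScore, infoNCEScore, hsum, ← hcoord j, Equiv.swap_apply_right]

lemma integral_infoNCEScore_pi [MeasurableSpace X] (μ : Measure X) [IsProbabilityMeasure μ]
    (hr : Measurable r) (hr_pos : ∀ x, 0 < r x) (i : Fin K) :
    ∫ x, infoNCEScore K r i x ∂(Measure.pi fun _ => μ) = 1 := by
  have hK : (K : ℝ) ≠ 0 := by have := i.pos; positivity
  refine (mul_eq_left₀ hK).1 ?_
  calc (K : ℝ) * ∫ x, infoNCEScore K r i x ∂(Measure.pi fun _ => μ)
      = ∑ j, ∫ x, infoNCEScore K r j x ∂(Measure.pi fun _ => μ) := by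
        simp [integral_infoNCEScore_pi_eq μ _ i]
    _ = ∫ x, ∑ j, infoNCEScore K r j x ∂(Measure.pi fun _ => μ) :=
        (integral_finsetSum _ fun j _ => integrable_infoNCEScore _ hr hr_pos j).symm
    _ = K := by simp [sum_infoNCEScore hr_pos]

end Score

section InfoNCE

variable {X : Type*} [MeasurableSpace X] {K : ℕ} {r : X → ℝ}

lemma integral_log_infoNCEScore_le_log (μ : Measure (Fin K → X)) [IsProbabilityMeasure μ]
    (hr_pos : ∀ x, 0 < r x) (i : Fin K)
    (h_int : Integrable (fun x => log (infoNCEScore K r i x)) μ) :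
    ∫ x, log (infoNCEScore K r i x) ∂μ ≤ log K :=
  calc ∫ x, log (infoNCEScore K r i x) ∂μ ≤ ∫ _, log K ∂μ :=
        integral_mono h_int (integrable_const _) fun x =>
          log_le_log (infoNCEScore_pos hr_pos i x) (infoNCEScore_le hr_pos i x)
    _ = log K := by simp

variable (q1 q0 : Measure X)

instance [IsProbabilityMeasure q1] [IsProbabilityMeasure q0] (z : Fin K) :
    IsProbabilityMeasure (classMeasure q1 q0 K z) := by
  have : ∀ i, IsProbabilityMeasure (if i = z then q1 else q0) := fun i => by
    split_ifs <;> infer_instance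
  unfold classMeasure
  infer_instance

lemma measurePreserving_eval_classMeasure [IsProbabilityMeasure q1] [IsProbabilityMeasure q0]
    (z : Fin K) : MeasurePreserving (Function.eval z) (classMeasure q1 q0 K z) q1 := by
  have : ∀ i, IsProbabilityMeasure (if i = z then q1 else q0) := fun i => by
    split_ifs <;> infer_instance
  simpa [classMeasure] using measurePreserving_eval (μ := fun i => if i = z then q1 else q0) z

lemma classMeasure_withDensity_exp_neg_llr_le [SigmaFinite q1] [SigmaFinite q0] (h_ac : q1 ≪ q0)
    (z : Fin K) :
    (classMeasure q1 q0 K z).withDensity (fun x => ENNReal.ofReal (exp (-llr q1 q0 (x z))))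
      ≤ Measure.pi fun _ => q0 := by
  obtain ⟨n, rfl⟩ : ∃ n, K = n + 1 := ⟨K - 1, by have := z.pos; omega⟩
  have : ∀ i, SigmaFinite (if i = z then q1 else q0) := fun i => by
    split_ifs <;> infer_instance
  have hupdate : Function.update (fun i => if i = z then q1 else q0) z q0 = fun _ => q0 := by
    funext i
    by_cases hi : i = z <;> simp [hi]
  rw [classMeasure, ← hupdate]
  refine pi_withDensity_eval_le (μ := fun i => if i = z then q1 else q0)
    (d := fun a => ENNReal.ofReal (exp (-llr q1 q0 a))) z
    (measurable_llr q1 q0).neg.exp.ennreal_ofReal ?_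
  simpa only [if_pos] using withDensity_exp_neg_llr_le h_ac

lemma integral_log_infoNCEScore_le_integral_llr
    [IsProbabilityMeasure q1] [IsProbabilityMeasure q0]
    (hr : Measurable r) (hr_pos : ∀ x, 0 < r x) (h_ac : q1 ≪ q0)
    (h_llr : Integrable (llr q1 q0) q1) (z : Fin K)
    (h_int : Integrable (fun x => log (infoNCEScore K r z x)) (classMeasure q1 q0 K z)) :
    ∫ x, log (infoNCEScore K r z x) ∂(classMeasure q1 q0 K z) ≤ ∫ a, llr q1 q0 a ∂q1 := by
  have hz := measurePreserving_eval_classMeasure q1 q0 z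
  have hexp : ∀ x, exp (log (infoNCEScore K r z x)) = infoNCEScore K r z x := fun x =>
    exp_log (infoNCEScore_pos hr_pos z x)
  have h_llr_z : ∫ x, llr q1 q0 (x z) ∂(classMeasure q1 q0 K z) = ∫ a, llr q1 q0 a ∂q1 := by
    rw [← integral_map hz.measurable.aemeasurable, hz.map_eq]
    exact (stronglyMeasurable_llr _ _).aestronglyMeasurable
  have := integral_le_integral_add_integral_exp_sub_one
    (μ := classMeasure q1 q0 K z) (ν := Measure.pi fun _ => q0) (φ := fun x => llr q1 q0 (x z))
    ((measurable_llr q1 q0).comp (measurable_pi_apply z)) (measurable_infoNCEScore hr z).log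
    ((hz.integrable_comp (stronglyMeasurable_llr _ _).aestronglyMeasurable).2 h_llr) h_int
    (by simpa only [hexp] using integrable_infoNCEScore _ hr hr_pos z)
    (classMeasure_withDensity_exp_neg_llr_le q1 q0 h_ac z)
  simpa only [hexp, integral_infoNCEScore_pi q0 hr hr_pos z, sub_self, add_zero, h_llr_z] using this

end InfoNCE

/-- the InfoNCE objective is bounded by `min (log K) (KL(q1 ‖ q0))`. -/
theorem infoNCE_le_min_logK_klDiv
    {X : Type*} [MeasurableSpace X] (q1 q0 : Measure X)
    [IsProbabilityMeasure q1] [IsProbabilityMeasure q0]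
    (K : ℕ) (hK : 2 ≤ K)
    (r : X → ℝ) (hr_meas : Measurable r) (hr_pos : ∀ x, 0 < r x)
    (h_int : Integrable
      (fun x : Fin K → X =>
        Real.log (r (x ⟨0, by omega⟩) / ((K : ℝ)⁻¹ * ∑ z, r (x z))))
      (classMeasure q1 q0 K ⟨0, by omega⟩)) :
    ((∫ x : Fin K → X,
        Real.log (r (x ⟨0, by omega⟩) / ((K : ℝ)⁻¹ * ∑ z, r (x z)))
        ∂(classMeasure q1 q0 K ⟨0, by omega⟩) : ℝ) : EReal)
      ≤ min ((Real.log K : ℝ) : EReal) (klDivE q1 q0) := by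
  refine le_min (EReal.coe_le_coe_iff.2 (integral_log_infoNCEScore_le_log _ hr_pos _ h_int)) ?_
  rw [klDivE]
  split_ifs with h_kl
  · exact EReal.coe_le_coe_iff.2
      (integral_log_infoNCEScore_le_integral_llr q1 q0 hr_meas hr_pos h_kl.1 h_kl.2 _ h_int)
  · exact le_top
end

section
/- Suppose q1 and q0 are mutually absolutely continuous, and let r* := dq1/dq0 (so r* > 0 q0-a.e.). Fix an integer K ≥ 2 and take ν = 0, and assume L_{K;0}(r*) is finite. Then for every measurable r : X → (0,∞) one has L_{K;0}(r*) ≤ L_{K;0}(r), and if a measurable r : X → (0,∞) satisfies L_{K;0}(r) = L_{K;0}(r*) then there exists a constant C > 0 such that r = C · r* holds q0-almost everywhere. -/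
open MeasureTheory
open scoped ENNReal

/-- The InfoNCE-anchor objective
`L_{K;ν}(r) = −(K/(K+ν)) E_{q1 ⊗ q0^{K−1}}[log(r(x_1)/(ν + ∑_i r(x_i)))]
            − (ν/(K+ν)) E_{q0^{⊗K}}[log(ν/(ν + ∑_i r(x_i)))]`,
valued in `[0, ∞]` (both integrands are nonpositive for `ν ≥ 0` and `r > 0`; the second
term vanishes when `ν = 0`). -/
noncomputable def anchorLoss {X : Type*} [MeasurableSpace X]
    (q1 q0 : Measure X) (K : ℕ) (ν : ℝ) (r : X → ℝ) : ℝ≥0∞ :=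
  if hK : 0 < K then
    ENNReal.ofReal ((K : ℝ) / (K + ν)) *
      ∫⁻ x : Fin K → X,
        ENNReal.ofReal (- Real.log (r (x ⟨0, hK⟩) / (ν + ∑ i, r (x i))))
        ∂(classMeasure q1 q0 K ⟨0, hK⟩)
    + ENNReal.ofReal (ν / (K + ν)) *
      ∫⁻ x : Fin K → X,
        ENNReal.ofReal (- Real.log (ν / (ν + ∑ i, r (x i))))
        ∂(Measure.pi fun _ : Fin K => q0)
  else 0

/-!
Averaging the loss over the position of the positive sample turns `K · L_{K;0}(r)` into the
`q0^{⊗K}`-expectation of `∑_z r*(x_z) · (-log (r(x_z) / ∑_i r(x_i)))`: a cross-entropy between the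
weights `r*(x_z)` and the softmax of the scores `r(x_z)`. By Gibbs' inequality it is minimised
pointwise by `r = r*`, and equality forces `r(x_z) ∝ r*(x_z)` for almost every sample `x`;
comparing two independent coordinates then shows that `r / r*` is `q0`-a.e. constant.
-/

open ProbabilityTheory Finset InformationTheory

lemma mul_klFun_div_nonneg {p q : ℝ} (hp : 0 ≤ p) (hq : 0 < q) : 0 ≤ q * klFun (p / q) :=
  mul_nonneg hq.le (klFun_nonneg (div_nonneg hp hq.le))

lemma sum_mul_log_div_eq_sum_mul_klFun {ι : Type*} {s : Finset ι} {p q : ι → ℝ}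
    (hq : ∀ z ∈ s, q z ≠ 0) (hsum : ∑ z ∈ s, p z = ∑ z ∈ s, q z) :
    ∑ z ∈ s, p z * Real.log (p z / q z) = ∑ z ∈ s, q z * klFun (p z / q z) := by
  have hterm : ∀ z ∈ s, q z * klFun (p z / q z) = p z * Real.log (p z / q z) + (q z - p z) := by
    intro z hz
    rw [klFun_apply]
    field_simp [hq z hz]
    ring
  rw [sum_congr rfl hterm, sum_add_distrib, sum_sub_distrib, hsum, sub_self, add_zero]

section CrossEntropy

variable {ι : Type*} [Fintype ι] (w a : ι → ℝ)

noncomputable def crossEntropy : ℝ := ∑ z, w z * -Real.log (a z / ∑ i, a i)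

variable {w a}

lemma div_sum_pos [Nonempty ι] (ha : ∀ i, 0 < a i) (z : ι) : 0 < a z / ∑ i, a i :=
  div_pos (ha z) (sum_pos (fun i _ => ha i) univ_nonempty)

lemma neg_log_div_sum_nonneg (ha : ∀ i, 0 < a i) (z : ι) : 0 ≤ -Real.log (a z / ∑ i, a i) :=
  have : Nonempty ι := ⟨z⟩
  neg_nonneg.2 <| Real.log_nonpos (div_sum_pos ha z).le <|
    (div_le_one (sum_pos (fun i _ => ha i) univ_nonempty)).2 <|
      single_le_sum (fun i _ => (ha i).le) (mem_univ z)

@[fun_prop]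
lemma Measurable.crossEntropy {α : Type*} [MeasurableSpace α] {w a : α → ι → ℝ}
    (hw : Measurable w) (ha : Measurable a) : Measurable fun x => crossEntropy (w x) (a x) := by
  unfold _root_.crossEntropy
  fun_prop

lemma crossEntropy_nonneg (hw : ∀ z, 0 ≤ w z) (ha : ∀ z, 0 < a z) : 0 ≤ crossEntropy w a :=
  sum_nonneg fun z _ => mul_nonneg (hw z) (neg_log_div_sum_nonneg ha z)

lemma crossEntropy_sub_crossEntropy_self [Nonempty ι] (hw : ∀ z, 0 < w z) (ha : ∀ z, 0 < a z) :
    crossEntropy w a - crossEntropy w w =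
      (∑ i, w i) * ∑ z, (a z / ∑ i, a i) * klFun ((w z / ∑ i, w i) / (a z / ∑ i, a i)) := by
  have hW : (∑ i, w i) ≠ 0 := (sum_pos (fun i _ => hw i) univ_nonempty).ne'
  have hA : (∑ i, a i) ≠ 0 := (sum_pos (fun i _ => ha i) univ_nonempty).ne'
  rw [← sum_mul_log_div_eq_sum_mul_klFun (fun z _ => (div_sum_pos ha z).ne')
    (by rw [← sum_div, ← sum_div, div_self hW, div_self hA]),
    crossEntropy, crossEntropy, ← sum_sub_distrib, mul_sum]
  refine sum_congr rfl fun z _ => ?_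
  rw [Real.log_div (div_sum_pos hw z).ne' (div_sum_pos ha z).ne']
  field_simp
  ring

lemma crossEntropy_self_le [Nonempty ι] (hw : ∀ z, 0 < w z) (ha : ∀ z, 0 < a z) :
    crossEntropy w w ≤ crossEntropy w a := by
  have h_kl : 0 ≤ crossEntropy w a - crossEntropy w w := by
    rw [crossEntropy_sub_crossEntropy_self hw ha]
    exact mul_nonneg (sum_nonneg fun z _ => (hw z).le) <| sum_nonneg fun z _ =>
      mul_klFun_div_nonneg (div_sum_pos hw z).le (div_sum_pos ha z)
  linarith

lemma eq_mul_of_crossEntropy_eq [Nonempty ι] (hw : ∀ z, 0 < w z) (ha : ∀ z, 0 < a z)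
    (h : crossEntropy w a = crossEntropy w w) (z : ι) :
    a z = (∑ i, a i) / (∑ i, w i) * w z := by
  have hW : 0 < ∑ i, w i := sum_pos (fun i _ => hw i) univ_nonempty
  have hA : 0 < ∑ i, a i := sum_pos (fun i _ => ha i) univ_nonempty
  have hkl := crossEntropy_sub_crossEntropy_self hw ha
  rw [h, sub_self, eq_comm, mul_eq_zero, or_iff_right hW.ne',
    sum_eq_zero_iff_of_nonneg fun z _ =>
      mul_klFun_div_nonneg (div_sum_pos hw z).le (div_sum_pos ha z)] at hkl
  have := hkl z (mem_univ z)
  rw [mul_eq_zero, or_iff_right (div_sum_pos ha z).ne',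
    klFun_eq_zero_iff (div_pos (div_sum_pos hw z) (div_sum_pos ha z)).le,
    div_eq_one_iff_eq (div_sum_pos ha z).ne'] at this
  field_simp at this ⊢
  linarith

end CrossEntropy

lemma Set.indicator_univ_pi_prod {ι : Type*} [Fintype ι] {X : ι → Type*} {M : Type*}
    [CommMonoidWithZero M] (s : ∀ i, Set (X i)) (f : ∀ i, X i → M) (x : ∀ i, X i) :
    (Set.univ.pi s).indicator (fun x => ∏ i, f i (x i)) x = ∏ i, (s i).indicator (f i) (x i) := by
  classical
  simp only [Set.indicator_apply, Set.mem_univ_pi]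
  exact Fintype.prod_ite_zero.symm

lemma MeasureTheory.Measure.pi_withDensity {ι : Type*} [Fintype ι] {X : ι → Type*}
    [∀ i, MeasurableSpace (X i)] (μ : ∀ i, Measure (X i)) [∀ i, IsProbabilityMeasure (μ i)]
    {f : ∀ i, X i → ℝ≥0∞} (hf : ∀ i, Measurable (f i))
    [∀ i, SigmaFinite ((μ i).withDensity (f i))] :
    (Measure.pi fun i => (μ i).withDensity (f i) : Measure (∀ i, X i)) =
      (Measure.pi μ).withDensity (fun x => ∏ i, f i (x i)) := by
  refine Measure.pi_eq fun s hs => ?_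
  have hindep : iIndepFun (fun i x => (s i).indicator (f i) (x i)) (Measure.pi μ) :=
    iIndepFun_pi fun i => ((hf i).indicator (hs i)).aemeasurable
  rw [withDensity_apply _ (.univ_pi hs), ← lintegral_indicator (.univ_pi hs)]
  simp_rw [Set.indicator_univ_pi_prod]
  rw [lintegral_prod_eq_prod_lintegral_of_indepFun _ _ hindep
    fun i => ((hf i).indicator (hs i)).comp (measurable_pi_apply i)]
  refine prod_congr rfl fun i _ => ?_
  rw [(measurePreserving_eval μ i).lintegral_comp ((hf i).indicator (hs i)),
    lintegral_indicator (hs i), withDensity_apply _ (hs i)]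

lemma MeasureTheory.lintegral_pi_comp_perm {ι : Type*} [Fintype ι] {X : Type*} [MeasurableSpace X]
    (μ : Measure X) [SigmaFinite μ] (σ : Equiv.Perm ι) (g : (ι → X) → ℝ≥0∞) :
    ∫⁻ x, g (x ∘ σ) ∂Measure.pi (fun _ => μ) = ∫⁻ x, g x ∂Measure.pi (fun _ => μ) :=
  (measurePreserving_arrowCongr' (fun _ => μ) (fun _ => μ) σ.symm (MeasurableEquiv.refl X)
    fun _ => .id μ).lintegral_comp_emb (MeasurableEquiv.measurableEmbedding _) g

lemma MeasureTheory.ae_pi_forall_apply {ι : Type*} [Fintype ι] {X : Type*} [MeasurableSpace X]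
    {μ : Measure X} [SigmaFinite μ] {P : X → Prop} (h : ∀ᵐ y ∂μ, P y) :
    ∀ᵐ x ∂Measure.pi (fun _ : ι => μ), ∀ i, P (x i) :=
  Filter.eventually_all.2 fun _ => Measure.tendsto_eval_ae_ae.eventually h

lemma MeasureTheory.Measure.pi_map_eval_prod_eval {ι : Type*} [Fintype ι] {X : Type*}
    [MeasurableSpace X] (μ : Measure X) [IsProbabilityMeasure μ] {i j : ι} (hij : i ≠ j) :
    (Measure.pi fun _ : ι => μ).map (fun x => (x i, x j)) = μ.prod μ := by
  have hindep : IndepFun (fun x : ι → X => x i) (fun x => x j) (Measure.pi fun _ => μ) :=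
    (iIndepFun_pi (X := fun _ => id) fun _ => aemeasurable_id).indepFun hij
  rw [(indepFun_iff_map_prod_eq_prod_map_map (measurable_pi_apply i).aemeasurable
    (measurable_pi_apply j).aemeasurable).1 hindep]
  exact congrArg₂ _ (measurePreserving_eval _ i).map_eq (measurePreserving_eval _ j).map_eq

lemma exists_ae_eq_mul_of_ae_pi {ι : Type*} [Fintype ι] {X : Type*} [MeasurableSpace X]
    {μ : Measure X} [IsProbabilityMeasure μ] {i j : ι} (hij : i ≠ j) {f g : X → ℝ}
    (hf : Measurable f) (hg : Measurable g) (hg_pos : ∀ᵐ y ∂μ, 0 < g y)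
    (h : ∀ᵐ x ∂Measure.pi (fun _ : ι => μ), f (x i) * g (x j) = f (x j) * g (x i)) :
    ∃ y₀, 0 < g y₀ ∧ ∀ᵐ y ∂μ, f y = f y₀ / g y₀ * g y := by
  have hpair : ∀ᵐ p ∂μ.prod μ, f p.1 * g p.2 = f p.2 * g p.1 := by
    rw [← Measure.pi_map_eval_prod_eval μ hij,
      ae_map_iff (by fun_prop) (measurableSet_eq_fun (by fun_prop) (by fun_prop))]
    exact h
  obtain ⟨y₀, hy₀, hae⟩ := (hg_pos.and (Measure.ae_ae_of_ae_prod hpair)).exists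
  refine ⟨y₀, hy₀, hae.mono fun y hy => ?_⟩
  field_simp
  linarith

lemma ae_eq_of_ae_le_of_lintegral_ofReal_eq {α : Type*} [MeasurableSpace α] {μ : Measure α}
    {f g : α → ℝ} (hf : ∀ᵐ x ∂μ, 0 ≤ f x) (hfg : ∀ᵐ x ∂μ, f x ≤ g x) (hg : AEMeasurable g μ)
    (h_fin : ∫⁻ x, ENNReal.ofReal (f x) ∂μ ≠ ⊤)
    (h_eq : ∫⁻ x, ENNReal.ofReal (g x) ∂μ = ∫⁻ x, ENNReal.ofReal (f x) ∂μ) :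
    f =ᵐ[μ] g := by
  have := ae_eq_of_ae_le_of_lintegral_le (hfg.mono fun x hx => ENNReal.ofReal_le_ofReal hx)
    h_fin hg.ennreal_ofReal h_eq.le
  filter_upwards [this, hf, hfg] with x hx hfx hfgx
  exact (ENNReal.ofReal_eq_ofReal_iff hfx (hfx.trans hfgx)).1 hx

section InfoNCE

variable {X : Type*} [MeasurableSpace X] {q1 q0 : Measure X} [IsFiniteMeasure q1]
  [IsProbabilityMeasure q0] {K : ℕ} {r : X → ℝ}

lemma classMeasure_eq_withDensity (h10 : q1 ≪ q0) (z : Fin K) :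
    classMeasure q1 q0 K z =
      (Measure.pi fun _ => q0).withDensity (fun x => q1.rnDeriv q0 (x z)) := by
  classical
  set g : Fin K → X → ℝ≥0∞ := fun i => if i = z then q1.rnDeriv q0 else 1
  have hg : ∀ i, q0.withDensity (g i) = if i = z then q1 else q0 := fun i => by
    split_ifs with hi <;> simp [g, hi, Measure.withDensity_rnDeriv_eq q1 q0 h10]
  have : ∀ i, SigmaFinite (q0.withDensity (g i)) := fun i => by
    rw [hg]; split_ifs <;> infer_instance
  have := Measure.pi_withDensity (fun _ => q0) (f := g)
    fun i => by by_cases hi : i = z <;> simp [g, hi, Measure.measurable_rnDeriv, measurable_one]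
  simp only [hg] at this
  rw [classMeasure, this]
  congr with x
  simp [g, ite_apply, prod_ite_eq']

lemma natCast_mul_anchorLoss_zero (h10 : q1 ≪ q0) (hK : 0 < K) (hr : Measurable r)
    (hr_pos : ∀ᵐ y ∂q0, 0 < r y) :
    K * anchorLoss q1 q0 K 0 r =
      ∫⁻ x, ENNReal.ofReal (crossEntropy (fun z => (q1.rnDeriv q0 (x z)).toReal) (fun z => r (x z)))
        ∂Measure.pi fun _ : Fin K => q0 := by
  set T : Fin K → (Fin K → X) → ℝ≥0∞ := fun z x =>
    q1.rnDeriv q0 (x z) * ENNReal.ofReal (-Real.log (r (x z) / ∑ i, r (x i)))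
  have hT : ∀ z, Measurable (T z) := fun z => by
    have := Measure.measurable_rnDeriv q1 q0
    fun_prop
  have h_loss : anchorLoss q1 q0 K 0 r = ∫⁻ x, T ⟨0, hK⟩ x ∂Measure.pi fun _ => q0 := by
    rw [anchorLoss, dif_pos hK, classMeasure_eq_withDensity h10,
      lintegral_withDensity_eq_lintegral_mul _ (by fun_prop) (by fun_prop)]
    simp [T, hK.ne']
  have h_symm : ∀ z, ∫⁻ x, T z x ∂Measure.pi (fun _ => q0) =
      ∫⁻ x, T ⟨0, hK⟩ x ∂Measure.pi fun _ => q0 := by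
    intro z
    rw [← lintegral_pi_comp_perm q0 (Equiv.swap ⟨0, hK⟩ z) (T z)]
    congr with x
    simp only [T, Function.comp_apply, Equiv.swap_apply_right]
    rw [Equiv.sum_comp (Equiv.swap ⟨0, hK⟩ z) fun i => r (x i)]
  calc (K : ℝ≥0∞) * anchorLoss q1 q0 K 0 r = ∑ z, ∫⁻ x, T z x ∂Measure.pi fun _ => q0 := by
        simp [h_symm, h_loss]
    _ = ∫⁻ x, ∑ z, T z x ∂Measure.pi fun _ => q0 := (lintegral_finsetSum _ fun z _ => hT z).symm
    _ = _ := by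
      refine lintegral_congr_ae ?_
      filter_upwards [ae_pi_forall_apply (hr_pos.and (Measure.rnDeriv_lt_top q1 q0))] with x hx
      rw [crossEntropy, ENNReal.ofReal_sum_of_nonneg fun z _ =>
        mul_nonneg ENNReal.toReal_nonneg (neg_log_div_sum_nonneg (fun i => (hx i).1) z)]
      refine sum_congr rfl fun z _ => ?_
      rw [ENNReal.ofReal_mul ENNReal.toReal_nonneg, ENNReal.ofReal_toReal (hx z).2.ne]

lemma ae_rnDeriv_toReal_pos (h01 : q0 ≪ q1) : ∀ᵐ y ∂q0, 0 < (q1.rnDeriv q0 y).toReal := by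
  filter_upwards [Measure.rnDeriv_pos' h01, Measure.rnDeriv_lt_top q1 q0] with y hy hy'
  exact ENNReal.toReal_pos hy.ne' hy'.ne

lemma ae_crossEntropy_rnDeriv_le (h01 : q0 ≪ q1) [NeZero K] (hr_pos : ∀ x, 0 < r x) :
    ∀ᵐ x ∂Measure.pi (fun _ : Fin K => q0),
      crossEntropy (fun z => (q1.rnDeriv q0 (x z)).toReal) (fun z => (q1.rnDeriv q0 (x z)).toReal) ≤
        crossEntropy (fun z => (q1.rnDeriv q0 (x z)).toReal) (fun z => r (x z)) := by
  filter_upwards [ae_pi_forall_apply (ae_rnDeriv_toReal_pos h01)] with x hx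
  exact crossEntropy_self_le hx fun z => hr_pos _

lemma anchorLoss_zero_rnDeriv_le (h10 : q1 ≪ q0) (h01 : q0 ≪ q1) (hK : 0 < K)
    (hr : Measurable r) (hr_pos : ∀ x, 0 < r x) :
    anchorLoss q1 q0 K 0 (fun x => (q1.rnDeriv q0 x).toReal) ≤ anchorLoss q1 q0 K 0 r := by
  have : NeZero K := ⟨hK.ne'⟩
  rw [← ENNReal.mul_le_mul_iff_right (Nat.cast_ne_zero.2 hK.ne') (ENNReal.natCast_ne_top K),
    natCast_mul_anchorLoss_zero h10 hK (by fun_prop) (ae_rnDeriv_toReal_pos h01),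
    natCast_mul_anchorLoss_zero h10 hK hr (.of_forall hr_pos)]
  exact lintegral_mono_ae <|
    (ae_crossEntropy_rnDeriv_le h01 hr_pos).mono fun x hx => ENNReal.ofReal_le_ofReal hx

lemma exists_ae_eq_mul_rnDeriv_of_anchorLoss_zero_eq (h10 : q1 ≪ q0) (h01 : q0 ≪ q1)
    (hK : 2 ≤ K) (h_fin : anchorLoss q1 q0 K 0 (fun x => (q1.rnDeriv q0 x).toReal) ≠ ⊤)
    (hr : Measurable r) (hr_pos : ∀ x, 0 < r x)
    (h_eq : anchorLoss q1 q0 K 0 r = anchorLoss q1 q0 K 0 (fun x => (q1.rnDeriv q0 x).toReal)) :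
    ∃ C, 0 < C ∧ ∀ᵐ x ∂q0, r x = C * (q1.rnDeriv q0 x).toReal := by
  have hK0 : 0 < K := by omega
  have : NeZero K := ⟨hK0.ne'⟩
  have hρ_pos := ae_rnDeriv_toReal_pos h01
  have hρ : Measurable fun x => (q1.rnDeriv q0 x).toReal := by fun_prop
  have h_repr_ρ := natCast_mul_anchorLoss_zero h10 hK0 hρ hρ_pos
  have h_repr_r := natCast_mul_anchorLoss_zero h10 hK0 hr (.of_forall hr_pos)
  have h_ce := ae_eq_of_ae_le_of_lintegral_ofReal_eq
    ((ae_pi_forall_apply hρ_pos).mono fun x hx => crossEntropy_nonneg (fun z => (hx z).le) hx)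
    (ae_crossEntropy_rnDeriv_le h01 hr_pos) (by fun_prop)
    (by rw [← h_repr_ρ]; exact ENNReal.mul_ne_top (ENNReal.natCast_ne_top K) h_fin)
    (by rw [← h_repr_ρ, ← h_repr_r, h_eq])
  have h_pair : ∀ᵐ x ∂Measure.pi (fun _ : Fin K => q0),
      r (x ⟨0, hK0⟩) * (q1.rnDeriv q0 (x ⟨1, hK⟩)).toReal =
        r (x ⟨1, hK⟩) * (q1.rnDeriv q0 (x ⟨0, hK0⟩)).toReal := by
    filter_upwards [h_ce, ae_pi_forall_apply hρ_pos] with x hx hxρ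
    have h := eq_mul_of_crossEntropy_eq hxρ (fun z => hr_pos (x z)) hx.symm
    rw [h ⟨0, hK0⟩, h ⟨1, hK⟩]
    ring
  obtain ⟨y₀, hy₀, hae⟩ :=
    exists_ae_eq_mul_of_ae_pi (Fin.ne_of_val_ne zero_ne_one) hr hρ hρ_pos h_pair
  exact ⟨r y₀ / (q1.rnDeriv q0 y₀).toReal, div_pos (hr_pos y₀) hy₀, hae⟩

end InfoNCE

/-- Fisher consistency, `ν = 0`, `K ≥ 2`: the density ratio `r* = dq1/dq0` is a
global minimizer of the InfoNCE objective (anchor weight `ν = 0`), and any minimizer is a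
positive constant multiple of `r*`, `q0`-a.e. -/
theorem anchorLoss_fisher_consistency_zero_nu
    {X : Type*} [MeasurableSpace X] (q1 q0 : Measure X)
    [IsProbabilityMeasure q1] [IsProbabilityMeasure q0]
    (h10 : q1 ≪ q0) (h01 : q0 ≪ q1)
    (K : ℕ) (hK : 2 ≤ K)
    (h_fin : anchorLoss q1 q0 K 0 (fun x => (q1.rnDeriv q0 x).toReal) ≠ ⊤) :
    (∀ r : X → ℝ, Measurable r → (∀ x, 0 < r x) →
        anchorLoss q1 q0 K 0 (fun x => (q1.rnDeriv q0 x).toReal)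
          ≤ anchorLoss q1 q0 K 0 r)
    ∧ (∀ r : X → ℝ, Measurable r → (∀ x, 0 < r x) →
        anchorLoss q1 q0 K 0 r
          = anchorLoss q1 q0 K 0 (fun x => (q1.rnDeriv q0 x).toReal) →
        ∃ C : ℝ, 0 < C ∧ ∀ᵐ x ∂q0, r x = C * (q1.rnDeriv q0 x).toReal) :=
  ⟨fun _ hr hr_pos => anchorLoss_zero_rnDeriv_le h10 h01 (by omega) hr hr_pos,
    fun _ hr hr_pos h_eq =>
      exists_ae_eq_mul_rnDeriv_of_anchorLoss_zero_eq h10 h01 hK h_fin hr hr_pos h_eq⟩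
end

section
/- Let β ≥ 0. For every measurable r : X → (0,∞) such that ∫ r dq0 < ∞ and ∫ log r dq1 exists, the generalized Donsker–Varadhan bound holds: ∫ log r dq1 − (β+1) · log( β/(β+1) + (1/(β+1)) ∫ r dq0 ) ≤ KL(q1 ‖ q0). Moreover, if KL(q1 ‖ q0) < ∞ and β > 0, equality holds if and only if r = dq1/dq0 q0-almost everywhere; if β = 0, equality holds if and only if r = c · (dq1/dq0) q0-almost everywhere for some constant c > 0. (The case β = 0 is the Donsker–Varadhan bound, and letting β → ∞ recovers the Nguyen–Wainwright–Jordan bound ∫ log r dq1 − ∫ r dq0 + 1 ≤ KL(q1 ‖ q0).) -/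
open MeasureTheory
open scoped ENNReal Classical


open MeasureTheory
open scoped ENNReal Classical

lemma pt_ineq {a b : ℝ} (ha : 0 ≤ a) (hb : 0 < b) :
    a - b ≤ a * (Real.log a - Real.log b) ∧
    (a * (Real.log a - Real.log b) = a - b ↔ a = b) := by
  rcases ha.eq_or_lt with h0 | ha'
  · refine ⟨by rw [← h0]; simpa using hb.le, ?_⟩
    constructor
    · intro h; rw [← h0] at h; simp at h; linarith
    · intro h; rw [← h0] at h; exact absurd h.symm hb.ne'
  · have hd : 0 < b / a := div_pos hb ha'
    have hlog : Real.log (b / a) = Real.log b - Real.log a := Real.log_div hb.ne' ha'.ne'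
    have h2 : a * (b / a - 1) = b - a := by field_simp
    have key : Real.log (b / a) ≤ b / a - 1 := Real.log_le_sub_one_of_pos hd
    have h1 : a * (Real.log b - Real.log a) ≤ a * (b / a - 1) := by
      rw [← hlog]; exact mul_le_mul_of_nonneg_left key ha'.le
    refine ⟨by nlinarith, ?_, ?_⟩
    · intro heq
      by_contra hne
      have hne' : b / a ≠ 1 := by
        intro h; exact hne ((div_eq_one_iff_eq ha'.ne').1 h).symm
      have key' : Real.log (b / a) < b / a - 1 := Real.log_lt_sub_one_of_pos hd hne'
      have h1' : a * (Real.log b - Real.log a) < a * (b / a - 1) := by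
        rw [← hlog]; exact mul_lt_mul_of_pos_left key' ha'
      nlinarith
    · intro h; rw [h]; ring

lemma gibbs {X : Type*} [MeasurableSpace X] (q1 q0 : Measure X)
    [IsProbabilityMeasure q1] [IsProbabilityMeasure q0] (h_ac : q1 ≪ q0)
    (g : X → ℝ) (hg_pos : ∀ x, 0 < g x)
    (hg_int : Integrable g q0) (hg_one : ∫ x, g x ∂q0 = 1)
    (h_logg : Integrable (fun x => Real.log (g x)) q1)
    (h_llr : Integrable (llr q1 q0) q1) :
    (∫ x, Real.log (g x) ∂q1 ≤ ∫ x, llr q1 q0 x ∂q1) ∧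
    ((∫ x, Real.log (g x) ∂q1 = ∫ x, llr q1 q0 x ∂q1) ↔
      ∀ᵐ x ∂q0, (q1.rnDeriv q0 x).toReal = g x) := by
  set ρ : X → ℝ := fun x => (q1.rnDeriv q0 x).toReal with hρ
  have hρ_nonneg : ∀ x, 0 ≤ ρ x := fun x => ENNReal.toReal_nonneg
  have int1 : Integrable (fun x => ρ x * llr q1 q0 x) q0 := by
    simpa [smul_eq_mul] using (MeasureTheory.integrable_rnDeriv_smul_iff h_ac (f := llr q1 q0)).2 h_llr
  have int2 : Integrable (fun x => ρ x * Real.log (g x)) q0 := by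
    simpa [smul_eq_mul] using
      (MeasureTheory.integrable_rnDeriv_smul_iff h_ac (f := fun x => Real.log (g x))).2 h_logg
  have intρ : Integrable ρ q0 := Measure.integrable_toReal_rnDeriv
  have hρ_one : ∫ x, ρ x ∂q0 = 1 := by
    rw [hρ, Measure.integral_toReal_rnDeriv h_ac]; simp
  have e1 : ∫ x, ρ x * llr q1 q0 x ∂q0 = ∫ x, llr q1 q0 x ∂q1 := by
    simpa [smul_eq_mul] using MeasureTheory.integral_rnDeriv_smul h_ac (f := llr q1 q0)
  have e2 : ∫ x, ρ x * Real.log (g x) ∂q0 = ∫ x, Real.log (g x) ∂q1 := by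
    simpa [smul_eq_mul] using
      MeasureTheory.integral_rnDeriv_smul h_ac (f := fun x => Real.log (g x))
  set h : X → ℝ := fun x => ρ x * (Real.log (ρ x) - Real.log (g x)) - (ρ x - g x) with hh
  have h_nonneg : ∀ x, 0 ≤ h x := fun x => by
    have := (pt_ineq (hρ_nonneg x) (hg_pos x)).1
    simp only [hh]; linarith
  have h_eq : h = fun x => (ρ x * llr q1 q0 x - ρ x * Real.log (g x)) - (ρ x - g x) := by
    funext x; simp only [hh, llr, hρ]; ring
  have int_h : Integrable h q0 := by
    rw [h_eq]; exact (int1.sub int2).sub (intρ.sub hg_int)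
  have hI : ∫ x, h x ∂q0 = ∫ x, llr q1 q0 x ∂q1 - ∫ x, Real.log (g x) ∂q1 := by
    have intA : Integrable (fun x => ρ x * llr q1 q0 x - ρ x * Real.log (g x)) q0 :=
      int1.sub int2
    have intB : Integrable (fun x => ρ x - g x) q0 := intρ.sub hg_int
    simp only [h_eq]
    rw [integral_sub intA intB, integral_sub int1 int2,
      integral_sub intρ hg_int, e1, e2, hρ_one, hg_one]
    ring
  have hnn : 0 ≤ ∫ x, h x ∂q0 := integral_nonneg h_nonneg
  refine ⟨by linarith, ?_, ?_⟩
  · intro heq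
    have hz : ∫ x, h x ∂q0 = 0 := by rw [hI, heq]; ring
    have hae := (integral_eq_zero_iff_of_nonneg h_nonneg int_h).1 hz
    filter_upwards [hae] with x hx
    refine (pt_ineq (hρ_nonneg x) (hg_pos x)).2.1 ?_
    have : h x = 0 := hx
    simp only [hh] at this; linarith
  · intro hae
    have hz : h =ᵐ[q0] 0 := by
      filter_upwards [hae] with x hx
      simp only [hh, Pi.zero_apply]
      rw [show ρ x = g x from hx]; ring
    have : ∫ x, h x ∂q0 = 0 := by
      rw [integral_congr_ae hz]; simp
    linarith [hI ▸ this]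

/-- the generalized Donsker--Varadhan bound
`∫ log r dq1 − (β+1)·log(β/(β+1) + (1/(β+1)) ∫ r dq0) ≤ KL(q1 ‖ q0)`, together with its
equality conditions when `KL(q1 ‖ q0) < ∞`. -/
theorem generalized_dv_bound
    {X : Type*} [MeasurableSpace X] (q1 q0 : Measure X)
    [IsProbabilityMeasure q1] [IsProbabilityMeasure q0]
    (h_ac : q1 ≪ q0)
    (β : ℝ) (hβ : 0 ≤ β)
    (r : X → ℝ) (hr_meas : Measurable r) (hr_pos : ∀ x, 0 < r x)
    (h_int_r : Integrable r q0)
    (h_int_log : Integrable (fun x => Real.log (r x)) q1) :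
    ((((∫ x, Real.log (r x) ∂q1)
        - (β + 1) * Real.log (β / (β + 1) + (β + 1)⁻¹ * ∫ x, r x ∂q0) : ℝ)) : EReal)
      ≤ klDivE q1 q0
    ∧ (Integrable (llr q1 q0) q1 →
        (0 < β →
          ((∫ x, Real.log (r x) ∂q1)
              - (β + 1) * Real.log (β / (β + 1) + (β + 1)⁻¹ * ∫ x, r x ∂q0)
            = ∫ x, llr q1 q0 x ∂q1
          ↔ ∀ᵐ x ∂q0, r x = (q1.rnDeriv q0 x).toReal))
        ∧ (β = 0 →
          ((∫ x, Real.log (r x) ∂q1)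
              - (β + 1) * Real.log (β / (β + 1) + (β + 1)⁻¹ * ∫ x, r x ∂q0)
            = ∫ x, llr q1 q0 x ∂q1
          ↔ ∃ c : ℝ, 0 < c ∧ ∀ᵐ x ∂q0, r x = c * (q1.rnDeriv q0 x).toReal))) := by
  have hβ1 : (0:ℝ) < β + 1 := by linarith
  set ρ : X → ℝ := fun x => (q1.rnDeriv q0 x).toReal with hρ
  have hρ_one : ∫ x, ρ x ∂q0 = 1 := by
    rw [hρ, Measure.integral_toReal_rnDeriv h_ac]; simp
  set m : ℝ := ∫ x, r x ∂q0 with hm_def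
  have hm_pos : 0 < m := by
    rw [hm_def]
    refine (integral_pos_iff_support_of_nonneg_ae
      (ae_of_all _ fun x => (hr_pos x).le) h_int_r).2 ?_
    have hsupp : Function.support r = Set.univ :=
      Set.eq_univ_of_forall fun x => (hr_pos x).ne'
    simp [hsupp]
  set g : X → ℝ := fun x => r x * m⁻¹ with hg_def
  have hg_pos : ∀ x, 0 < g x := fun x => mul_pos (hr_pos x) (inv_pos.2 hm_pos)
  have hg_int : Integrable g q0 := h_int_r.mul_const _
  have hg_one : ∫ x, g x ∂q0 = 1 := by
    rw [hg_def, integral_mul_const, ← hm_def, mul_inv_cancel₀ hm_pos.ne']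
  have hlogg_eq : (fun x => Real.log (g x)) = fun x => Real.log (r x) - Real.log m := by
    funext x
    rw [hg_def]
    rw [Real.log_mul (hr_pos x).ne' (inv_ne_zero hm_pos.ne'), Real.log_inv]
    ring
  have h_logg : Integrable (fun x => Real.log (g x)) q1 := by
    rw [hlogg_eq]; exact h_int_log.sub (integrable_const _)
  have E_logg : ∫ x, Real.log (g x) ∂q1 = (∫ x, Real.log (r x) ∂q1) - Real.log m := by
    rw [hlogg_eq, integral_sub h_int_log (integrable_const _), integral_const]
    simp
  set L : ℝ := Real.log (β / (β + 1) + (β + 1)⁻¹ * m) with hL_def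
  have hw : β / (β + 1) + (β + 1)⁻¹ = 1 := by field_simp
  have kineq : Real.log m ≤ (β + 1) * L := by
    have hcc := strictConcaveOn_log_Ioi.concaveOn.2 (Set.mem_Ioi.2 one_pos)
      (Set.mem_Ioi.2 hm_pos) (div_nonneg hβ hβ1.le) (inv_nonneg.2 hβ1.le) hw
    simp only [smul_eq_mul, mul_one, Real.log_one, mul_zero, zero_add] at hcc
    have h2 := mul_le_mul_of_nonneg_left hcc hβ1.le
    rw [← mul_assoc, mul_inv_cancel₀ hβ1.ne', one_mul] at h2
    exact h2.trans_eq rfl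
  have kstrict : 0 < β → m ≠ 1 → Real.log m < (β + 1) * L := by
    intro hβpos hne
    have hcc := strictConcaveOn_log_Ioi.2 (Set.mem_Ioi.2 one_pos)
      (Set.mem_Ioi.2 hm_pos) (fun h => hne h.symm) (div_pos hβpos hβ1)
      (inv_pos.2 hβ1) hw
    simp only [smul_eq_mul, mul_one, Real.log_one, mul_zero, zero_add] at hcc
    have h2 := mul_lt_mul_of_pos_left hcc hβ1
    rw [← mul_assoc, mul_inv_cancel₀ hβ1.ne', one_mul] at h2
    exact h2
  have hLm1 : m = 1 → (β + 1) * L = 0 := by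
    intro hm1
    rw [hL_def, hm1, mul_one, hw, Real.log_one, mul_zero]
  constructor
  · by_cases hint : Integrable (llr q1 q0) q1
    · obtain ⟨hle, -⟩ := gibbs q1 q0 h_ac g hg_pos hg_int hg_one h_logg hint
      have hkl : klDivE q1 q0 = ((∫ x, llr q1 q0 x ∂q1 : ℝ) : EReal) := if_pos ⟨h_ac, hint⟩
      rw [hkl]
      exact_mod_cast (by linarith [E_logg] :
        (∫ x, Real.log (r x) ∂q1) - (β + 1) * L ≤ ∫ x, llr q1 q0 x ∂q1)
    · have hkl : klDivE q1 q0 = ⊤ := if_neg (fun hc => hint hc.2)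
      rw [hkl]; exact le_top
  · intro hint
    obtain ⟨hle, hiff⟩ := gibbs q1 q0 h_ac g hg_pos hg_int hg_one h_logg hint
    constructor
    · intro hβpos
      constructor
      · intro heq
        have h1 : (β + 1) * L ≤ Real.log m := by linarith [E_logg]
        have hm1 : m = 1 := by
          by_contra hne
          exact absurd (kstrict hβpos hne) (not_lt.2 h1)
        have hgeq : ∫ x, Real.log (g x) ∂q1 = ∫ x, llr q1 q0 x ∂q1 := by
          have := hLm1 hm1
          have hlm : Real.log m = 0 := by rw [hm1, Real.log_one]
          linarith [E_logg]
        have hae := hiff.1 hgeq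
        filter_upwards [hae] with x hx
        rw [hx]
        simp only [hg_def, hm1]
        simp
      · intro hae
        have hm1 : m = 1 := by
          have h' : ∫ x, r x ∂q0 = ∫ x, ρ x ∂q0 :=
            integral_congr_ae (by filter_upwards [hae] with x hx; exact hx)
          rw [hm_def, h', hρ_one]
        have hgρ : ∀ᵐ x ∂q0, ρ x = g x := by
          filter_upwards [hae] with x hx
          simp only [hg_def, hρ, hm1]
          rw [← hx]
          simp
        have hgeq := hiff.2 hgρ
        have hlm : Real.log m = 0 := by rw [hm1, Real.log_one]
        have := hLm1 hm1
        linarith [E_logg]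
    · intro hβ0
      subst hβ0
      have hL0 : L = Real.log m := by rw [hL_def]; norm_num
      constructor
      · intro heq
        refine ⟨m, hm_pos, ?_⟩
        have hgeq : ∫ x, Real.log (g x) ∂q1 = ∫ x, llr q1 q0 x ∂q1 := by
          rw [E_logg]; rw [hL0] at heq; linarith
        filter_upwards [hiff.1 hgeq] with x hx
        rw [hx]
        simp only [hg_def]
        field_simp
      · rintro ⟨c, hc, hae⟩
        have hmc : m = c := by
          have h' : ∫ x, r x ∂q0 = ∫ x, c * ρ x ∂q0 :=
            integral_congr_ae (by filter_upwards [hae] with x hx; exact hx)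
          rw [hm_def, h', integral_const_mul, hρ_one, mul_one]
        have hgρ : ∀ᵐ x ∂q0, ρ x = g x := by
          filter_upwards [hae] with x hx
          simp only [hg_def, hρ]
          rw [hx, hmc]
          field_simp
        have hgeq := hiff.2 hgρ
        rw [hL0]
        rw [E_logg] at hgeq
        linarith
end

section
/- Let r : X → (0,∞) be measurable with 0 < a ≤ r(x) ≤ b < ∞ for all x, let β ≥ 0, and let (ν_K)_{K≥1} be nonnegative reals with ν_K/K → β as K → ∞ (with ν_K > 0 for all K if β > 0). Then lim_{K→∞} ( −L_{K;ν_K}(r) + (K·log K)/(K+ν_K) ) = (β/(β+1))·log β + (1/(β+1))·∫ log r dq1 − log( β + ∫ r dq0 ), where (β/(β+1))·log β is interpreted as 0 when β = 0. -/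
open MeasureTheory Filter
open scoped ENNReal

/-- The (real-valued) InfoNCE-anchor objective
`L_{K;ν}(r) = −(K/(K+ν)) E_{q1 ⊗ q0^{K−1}}[log(r(x_1)/(ν + ∑_i r(x_i)))]
            − (ν/(K+ν)) E_{q0^{⊗K}}[log(ν/(ν + ∑_i r(x_i)))]`
(the second term vanishes when `ν = 0`; the value for `K = 0` is irrelevant). -/
noncomputable def anchorLossR {X : Type*} [MeasurableSpace X]
    (q1 q0 : Measure X) (K : ℕ) (ν : ℝ) (r : X → ℝ) : ℝ :=
  if hK : 0 < K then
    -(((K : ℝ) / ((K : ℝ) + ν)) *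
      ∫ x : Fin K → X, Real.log (r (x ⟨0, hK⟩) / (ν + ∑ i, r (x i)))
        ∂(classMeasure q1 q0 K ⟨0, hK⟩))
    - ((ν / ((K : ℝ) + ν)) *
      ∫ x : Fin K → X, Real.log (ν / (ν + ∑ i, r (x i)))
        ∂(Measure.pi fun _ : Fin K => q0))
  else 0

/-!
With `t = ν / K` and `A = (ν + ∑ i, r (x i)) / K`, the quantity `-L_{K;ν}(r) + K log K / (K + ν)`
equals `(1 + t)⁻¹ (E_{q1}[log r] - E₁[log A]) + (t log t - t E₀[log A]) / (1 + t)`, where `E₁` and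
`E₀` are the two sampling measures. Under any product of probability measures, `A ≥ a` and, by
Popoviciu's inequality, `Var A ≤ (b - a)² / (4K)`; as `log` is `1/a`-Lipschitz on `[a, ∞)`,
`E[log A]` is within `|b - a| / (2a√K)` of `log E[A]`, which tends to `log (β + E_{q0}[r])`.
Continuity of `t ↦ t log t` at `β` covers the case `β = 0`.
-/

open ProbabilityTheory Topology

lemma abs_log_sub_log_le {a u v : ℝ} (ha : 0 < a) (hu : a ≤ u) (hv : a ≤ v) :
    |Real.log u - Real.log v| ≤ |u - v| / a := by
  wlog huv : v ≤ u generalizing u v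
  · rw [abs_sub_comm, abs_sub_comm u]
    exact this hv hu (le_of_not_ge huv)
  have hu0 : 0 < u := ha.trans_le hu
  have hv0 : 0 < v := ha.trans_le hv
  rw [abs_of_nonneg (sub_nonneg.2 (Real.log_le_log hv0 huv)), abs_of_nonneg (sub_nonneg.2 huv),
    ← Real.log_div hu0.ne' hv0.ne']
  calc Real.log (u / v) ≤ u / v - 1 := Real.log_le_sub_one_of_pos (by positivity)
    _ = (u - v) / v := by field_simp
    _ ≤ (u - v) / a := div_le_div_of_nonneg_left (sub_nonneg.2 huv) ha hv

section Concentration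

variable {Ω : Type*} [MeasurableSpace Ω] {μ : Measure Ω}

lemma integrable_of_forall_mem_Icc [IsFiniteMeasure μ] {f : Ω → ℝ} {lo hi : ℝ}
    (hf : AEStronglyMeasurable f μ) (h : ∀ ω, f ω ∈ Set.Icc lo hi) : Integrable f μ :=
  memLp_one_iff_integrable.1 (memLp_of_bounded (ae_of_all _ h) hf 1)

lemma integral_abs_sub_integral_le_sqrt_variance [IsProbabilityMeasure μ] {Y : Ω → ℝ}
    (hY : MemLp Y 2 μ) : ∫ ω, |Y ω - μ[Y]| ∂μ ≤ √(Var[Y; μ]) := by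
  set Z : Ω → ℝ := fun ω => |Y ω - μ[Y]|
  have hZ : MemLp Z 2 μ := (hY.sub (memLp_const _)).abs
  have hZ_sq : μ[Z ^ 2] = Var[Y; μ] := by
    rw [variance_eq_integral hY.aemeasurable]
    simp [Z, sq_abs]
  refine Real.le_sqrt_of_sq_le ?_
  linarith [variance_nonneg Z μ, variance_eq_sub hZ]

lemma abs_integral_log_sub_log_integral_le [IsProbabilityMeasure μ] {Y : Ω → ℝ} {a c : ℝ}
    (ha : 0 < a) (hY : Measurable Y) (hY_mem : ∀ ω, Y ω ∈ Set.Icc a c) :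
    |∫ ω, Real.log (Y ω) ∂μ - Real.log (μ[Y])| ≤ √(Var[Y; μ]) / a := by
  have hY_int : Integrable Y μ := integrable_of_forall_mem_Icc hY.aestronglyMeasurable hY_mem
  have hlogY_int : Integrable (fun ω => Real.log (Y ω)) μ :=
    integrable_of_forall_mem_Icc (Real.measurable_log.comp hY).aestronglyMeasurable fun ω =>
      ⟨Real.log_le_log ha (hY_mem ω).1, Real.log_le_log (ha.trans_le (hY_mem ω).1) (hY_mem ω).2⟩
  have hmean : a ≤ μ[Y] := by
    simpa using integral_mono (integrable_const a) hY_int fun ω => (hY_mem ω).1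
  calc |∫ ω, Real.log (Y ω) ∂μ - Real.log (μ[Y])|
      = |∫ ω, (Real.log (Y ω) - Real.log (μ[Y])) ∂μ| := by
        rw [integral_sub hlogY_int (integrable_const _), integral_const]; simp
    _ ≤ ∫ ω, |Real.log (Y ω) - Real.log (μ[Y])| ∂μ := abs_integral_le_integral_abs
    _ ≤ ∫ ω, |Y ω - μ[Y]| / a ∂μ :=
        integral_mono (hlogY_int.sub (integrable_const _)).abs
          ((hY_int.sub (integrable_const _)).abs.div_const a)
          fun ω => abs_log_sub_log_le ha (hY_mem ω).1 hmean
    _ = (∫ ω, |Y ω - μ[Y]| ∂μ) / a := integral_div a _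
    _ ≤ √(Var[Y; μ]) / a := by
        gcongr
        exact integral_abs_sub_integral_le_sqrt_variance
          (memLp_of_bounded (ae_of_all _ hY_mem) hY.aestronglyMeasurable 2)

end Concentration

lemma variance_sum_pi_le {ι X : Type*} [Fintype ι] [MeasurableSpace X] {μ : ι → Measure X}
    [∀ i, IsProbabilityMeasure (μ i)] {f : X → ℝ} {a b : ℝ} (hf : Measurable f)
    (hf_mem : ∀ x, f x ∈ Set.Icc a b) :
    Var[fun x => ∑ i, f (x i); Measure.pi μ] ≤ Fintype.card ι * ((b - a) / 2) ^ 2 := by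
  have hsum := variance_sum_pi (μ := μ) (X := fun _ => f)
    fun i => memLp_of_bounded (ae_of_all _ hf_mem) hf.aestronglyMeasurable 2
  rw [Finset.sum_fn] at hsum
  rw [hsum]
  calc ∑ i, Var[f; μ i] ≤ ∑ _i : ι, ((b - a) / 2) ^ 2 :=
        Finset.sum_le_sum fun i _ =>
          variance_le_sq_of_bounded (ae_of_all _ hf_mem) hf.aemeasurable
    _ = Fintype.card ι * ((b - a) / 2) ^ 2 := by simp

section Partition

variable {X : Type*} {K : ℕ}

/-- The softmax denominator of the InfoNCE-anchor objective, divided by `K` so that it stays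
bounded as `K → ∞`. -/
noncomputable def anchorPartition (ν : ℝ) (r : X → ℝ) (x : Fin K → X) : ℝ :=
  (ν + ∑ i, r (x i)) / K

variable {ν a b : ℝ} {r : X → ℝ}

lemma anchorPartition_mem_Icc (hK : 0 < K) (hν : 0 ≤ ν) (hlb : ∀ x, a ≤ r x)
    (hub : ∀ x, r x ≤ b) (x : Fin K → X) :
    anchorPartition ν r x ∈ Set.Icc a ((ν + K * b) / K) := by
  have hK0 : (0 : ℝ) < K := Nat.cast_pos.2 hK
  have hsum_lb : K * a ≤ ∑ i, r (x i) := by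
    simpa using Finset.sum_le_sum fun i (_ : i ∈ Finset.univ) => hlb (x i)
  have hsum_ub : ∑ i, r (x i) ≤ K * b := by
    simpa using Finset.sum_le_sum fun i (_ : i ∈ Finset.univ) => hub (x i)
  refine ⟨(le_div_iff₀ hK0).2 (by linarith), ?_⟩
  unfold anchorPartition
  gcongr

lemma anchorPartition_pos (hK : 0 < K) (hν : 0 ≤ ν) (ha : 0 < a) (hlb : ∀ x, a ≤ r x)
    (hub : ∀ x, r x ≤ b) (x : Fin K → X) : 0 < anchorPartition ν r x :=
  ha.trans_le (anchorPartition_mem_Icc hK hν hlb hub x).1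

variable [MeasurableSpace X]

lemma measurable_anchorPartition (hr : Measurable r) :
    Measurable (anchorPartition (K := K) ν r) :=
  (measurable_const.add
    (Finset.measurable_sum _ fun i _ => hr.comp (measurable_pi_apply i))).div_const _

lemma integrable_log_anchorPartition (μ : Measure (Fin K → X)) [IsFiniteMeasure μ]
    (hK : 0 < K) (hν : 0 ≤ ν) (ha : 0 < a) (hr : Measurable r) (hlb : ∀ x, a ≤ r x)
    (hub : ∀ x, r x ≤ b) : Integrable (fun x => Real.log (anchorPartition ν r x)) μ := by
  refine integrable_of_forall_mem_Icc
    (Real.measurable_log.comp (measurable_anchorPartition hr)).aestronglyMeasurable fun x =>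
      ⟨Real.log_le_log ha (anchorPartition_mem_Icc hK hν hlb hub x).1,
        Real.log_le_log (anchorPartition_pos hK hν ha hlb hub x)
          (anchorPartition_mem_Icc hK hν hlb hub x).2⟩

variable (μ : Fin K → Measure X) [∀ i, IsProbabilityMeasure (μ i)]

lemma integral_anchorPartition (hr : Measurable r) (hlb : ∀ x, a ≤ r x) (hub : ∀ x, r x ≤ b) :
    ∫ x, anchorPartition ν r x ∂Measure.pi μ = (ν + ∑ i, ∫ y, r y ∂μ i) / K := by
  have hr_int : ∀ i, Integrable r (μ i) := fun i =>
    integrable_of_forall_mem_Icc hr.aestronglyMeasurable fun x => ⟨hlb x, hub x⟩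
  simp only [anchorPartition]
  rw [integral_div, integral_add (integrable_const _)
      (integrable_finsetSum _ fun i _ => integrable_comp_eval (hr_int i)),
    integral_finsetSum _ fun i _ => integrable_comp_eval (hr_int i), integral_const]
  simp only [probReal_univ, one_smul]
  congr 2
  exact Finset.sum_congr rfl fun i _ =>
    integral_comp_eval (X := fun _ => X) (μ := μ) (i := i) (f := r) hr.aestronglyMeasurable

lemma variance_anchorPartition_le (hK : 0 < K) (hr : Measurable r) (hlb : ∀ x, a ≤ r x)
    (hub : ∀ x, r x ≤ b) :
    Var[anchorPartition ν r; Measure.pi μ] ≤ ((b - a) / 2) ^ 2 / K := by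
  have hS : Measurable fun x : Fin K → X => ∑ i, r (x i) :=
    Finset.measurable_sum _ fun i _ => hr.comp (measurable_pi_apply i)
  have hVar := variance_sum_pi_le (μ := μ) hr fun x => ⟨hlb x, hub x⟩
  have hK0 : (0 : ℝ) < K := Nat.cast_pos.2 hK
  calc Var[anchorPartition ν r; Measure.pi μ]
      = ((K : ℝ)⁻¹) ^ 2 * Var[fun x => ∑ i, r (x i); Measure.pi μ] := by
        rw [← variance_const_add hS.aestronglyMeasurable ν, ← variance_const_mul]
        congr 1 with x
        simp [anchorPartition, div_eq_inv_mul]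
    _ ≤ ((K : ℝ)⁻¹) ^ 2 * (K * ((b - a) / 2) ^ 2) := by
        gcongr
        simpa using hVar
    _ = ((b - a) / 2) ^ 2 / K := by field_simp

lemma abs_integral_log_anchorPartition_sub_le (hK : 0 < K) (hν : 0 ≤ ν) (ha : 0 < a)
    (hr : Measurable r) (hlb : ∀ x, a ≤ r x) (hub : ∀ x, r x ≤ b) :
    |∫ x, Real.log (anchorPartition ν r x) ∂Measure.pi μ
        - Real.log ((ν + ∑ i, ∫ y, r y ∂μ i) / K)| ≤ |b - a| / (2 * a * √K) := by
  have hK0 : (0 : ℝ) < K := Nat.cast_pos.2 hK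
  have hsd : √(Var[anchorPartition ν r; Measure.pi μ]) ≤ |b - a| / (2 * √K) := by
    calc √(Var[anchorPartition ν r; Measure.pi μ]) ≤ √(((b - a) / 2) ^ 2 / K) :=
          Real.sqrt_le_sqrt (variance_anchorPartition_le μ hK hr hlb hub)
      _ = |b - a| / (2 * √K) := by
          rw [Real.sqrt_div' _ hK0.le, Real.sqrt_sq_eq_abs, abs_div, abs_two, div_div]
  calc _ ≤ √(Var[anchorPartition ν r; Measure.pi μ]) / a := by
        rw [← integral_anchorPartition μ hr hlb hub]
        exact abs_integral_log_sub_log_integral_le ha (measurable_anchorPartition hr)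
          (anchorPartition_mem_Icc hK hν hlb hub)
    _ ≤ |b - a| / (2 * √K) / a := by gcongr
    _ = |b - a| / (2 * a * √K) := by rw [div_div, mul_right_comm]

end Partition

lemma tendsto_integral_log_anchorPartition {X : Type*} [MeasurableSpace X]
    {μ : (K : ℕ) → Fin K → Measure X} [∀ K i, IsProbabilityMeasure (μ K i)] {ν : ℕ → ℝ}
    {r : X → ℝ} {a b β m : ℝ} (hν : ∀ K, 0 ≤ ν K)
    (h_lim : Tendsto (fun K : ℕ => ν K / K) atTop (𝓝 β))
    (hmean : Tendsto (fun K : ℕ => (∑ i, ∫ y, r y ∂μ K i) / K) atTop (𝓝 m))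
    (hβm : β + m ≠ 0) (ha : 0 < a) (hr : Measurable r) (hlb : ∀ x, a ≤ r x)
    (hub : ∀ x, r x ≤ b) :
    Tendsto (fun K : ℕ => ∫ x, Real.log (anchorPartition (ν K) r x) ∂Measure.pi (μ K)) atTop
      (𝓝 (Real.log (β + m))) := by
  have hmain : Tendsto (fun K : ℕ => Real.log ((ν K + ∑ i, ∫ y, r y ∂μ K i) / K)) atTop
      (𝓝 (Real.log (β + m))) := by
    simpa only [add_div] using (h_lim.add hmean).log hβm
  have hbound : Tendsto (fun K : ℕ => |b - a| / (2 * a * √K)) atTop (𝓝 0) :=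
    tendsto_const_nhds.div_atTop <|
      (Real.tendsto_sqrt_atTop.comp tendsto_natCast_atTop_atTop).const_mul_atTop (by positivity)
  have hgap : Tendsto (fun K : ℕ => ∫ x, Real.log (anchorPartition (ν K) r x) ∂Measure.pi (μ K)
      - Real.log ((ν K + ∑ i, ∫ y, r y ∂μ K i) / K)) atTop (𝓝 0) := by
    refine squeeze_zero_norm' ?_ hbound
    filter_upwards [eventually_gt_atTop 0] with K hK
    exact abs_integral_log_anchorPartition_sub_le (μ K) hK (hν K) ha hr hlb hub
  simpa using hgap.add hmain

lemma tendsto_sum_ite_val_eq_zero_div (u v : ℝ) :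
    Tendsto (fun K : ℕ => (∑ i : Fin K, if (i : ℕ) = 0 then u else v) / K) atTop (𝓝 v) := by
  have h : Tendsto (fun K : ℕ => v + (u - v) / K) atTop (𝓝 (v + 0)) :=
    tendsto_const_nhds.add (tendsto_const_div_atTop_nhds_zero_nat (u - v))
  rw [add_zero] at h
  refine h.congr' ?_
  filter_upwards [eventually_gt_atTop 0] with K hK
  obtain ⟨n, rfl⟩ := Nat.exists_eq_add_one_of_ne_zero hK.ne'
  rw [Fin.sum_univ_succ]
  simp only [Nat.cast_add, Nat.cast_one, Fin.coe_ofNat_eq_mod, Nat.zero_mod, ↓reduceIte,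
    Fin.val_succ, Nat.add_eq_zero_iff, one_ne_zero, and_false, Finset.sum_const,
    Finset.card_univ, Fintype.card_fin, nsmul_eq_mul]
  field_simp
  ring

section Identity

variable {X : Type*} [MeasurableSpace X] (q1 q0 : Measure X)

lemma classMeasure_zero {K : ℕ} (hK : 0 < K) :
    classMeasure q1 q0 K ⟨0, hK⟩ = Measure.pi fun i : Fin K => if (i : ℕ) = 0 then q1 else q0 := by
  simp [classMeasure, Fin.ext_iff]

variable [IsProbabilityMeasure q1] [IsProbabilityMeasure q0]

instance isProbabilityMeasure_ite {p : Prop} [Decidable p] :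
    IsProbabilityMeasure (if p then q1 else q0) := by
  split <;> infer_instance

lemma neg_anchorLossR_add_eq {K : ℕ} (hK : 0 < K) {ν a b : ℝ} (hν : 0 ≤ ν) (ha : 0 < a)
    {r : X → ℝ} (hr : Measurable r) (hlb : ∀ x, a ≤ r x) (hub : ∀ x, r x ≤ b) :
    -anchorLossR q1 q0 K ν r + K * Real.log K / (K + ν)
      = (1 + ν / K)⁻¹ * (∫ y, Real.log (r y) ∂q1 - ∫ x, Real.log (anchorPartition ν r x)
            ∂Measure.pi fun i : Fin K => if (i : ℕ) = 0 then q1 else q0)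
        + (ν / K * Real.log (ν / K) - ν / K * ∫ x, Real.log (anchorPartition ν r x)
            ∂Measure.pi fun _ : Fin K => q0) / (1 + ν / K) := by
  have hK0 : (0 : ℝ) < K := Nat.cast_pos.2 hK
  set z : Fin K := ⟨0, hK⟩
  set P₁ := Measure.pi fun i : Fin K => if (i : ℕ) = 0 then q1 else q0
  set P₀ := Measure.pi fun _ : Fin K => q0
  have hA_pos := anchorPartition_pos hK hν ha hlb hub
  have hA_int (P : Measure (Fin K → X)) [IsFiniteMeasure P] :=
    integrable_log_anchorPartition P hK hν ha hr hlb hub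
  have hsum_eq (x : Fin K → X) : ν + ∑ i, r (x i) = K * anchorPartition ν r x :=
    (mul_div_cancel₀ _ hK0.ne').symm
  have hlogr_int : Integrable (fun x : Fin K → X => Real.log (r (x z))) P₁ :=
    integrable_comp_eval (X := fun _ => X) (i := z) (f := fun y => Real.log (r y)) <|
      integrable_of_forall_mem_Icc (Real.measurable_log.comp hr).aestronglyMeasurable fun y =>
        ⟨Real.log_le_log ha (hlb y), Real.log_le_log (ha.trans_le (hlb y)) (hub y)⟩
  have hmarg : ∫ x, Real.log (r (x z)) ∂P₁ = ∫ y, Real.log (r y) ∂q1 :=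
    (integral_comp_eval (X := fun _ => X) (i := z) (f := fun y => Real.log (r y))
      (Real.measurable_log.comp hr).aestronglyMeasurable).trans (by simp [z])
  have hpos_term : ∫ x, Real.log (r (x z) / (ν + ∑ i, r (x i))) ∂P₁
      = ∫ y, Real.log (r y) ∂q1 - ∫ x, Real.log (anchorPartition ν r x) ∂P₁ - Real.log K := by
    have hpt (x : Fin K → X) : Real.log (r (x z) / (ν + ∑ i, r (x i)))
        = Real.log (r (x z)) - Real.log (anchorPartition ν r x) - Real.log K := by
      rw [hsum_eq, Real.log_div (ha.trans_le (hlb _)).ne' (mul_pos hK0 (hA_pos x)).ne',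
        Real.log_mul hK0.ne' (hA_pos x).ne']
      ring
    rw [integral_congr_ae (ae_of_all _ hpt),
      integral_sub (f := fun x => Real.log (r (x z)) - Real.log (anchorPartition ν r x))
        (hlogr_int.sub (hA_int P₁)) (integrable_const _),
      integral_sub hlogr_int (hA_int P₁), integral_const, hmarg]
    simp
  have hneg_term : ν * ∫ x, Real.log (ν / (ν + ∑ i, r (x i))) ∂P₀
      = ν * (Real.log (ν / K) - ∫ x, Real.log (anchorPartition ν r x) ∂P₀) := by
    rcases hν.eq_or_lt with rfl | hν_pos
    · simp
    have hpt (x : Fin K → X) : Real.log (ν / (ν + ∑ i, r (x i)))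
        = Real.log (ν / K) - Real.log (anchorPartition ν r x) := by
      rw [hsum_eq, ← div_div, Real.log_div (by positivity) (hA_pos x).ne']
    rw [integral_congr_ae (ae_of_all _ hpt), integral_sub (integrable_const _) (hA_int P₀),
      integral_const]
    simp
  rw [anchorLossR, dif_pos hK, classMeasure_zero, hpos_term, div_mul_eq_mul_div ν, hneg_term]
  field_simp
  ring

end Identity

theorem anchorLoss_asymptotic_general
    {X : Type*} [MeasurableSpace X] (q1 q0 : Measure X)
    [IsProbabilityMeasure q1] [IsProbabilityMeasure q0]
    (a b : ℝ) (ha : 0 < a)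
    (r : X → ℝ) (hr_meas : Measurable r)
    (hr_lb : ∀ x, a ≤ r x) (hr_ub : ∀ x, r x ≤ b)
    (β : ℝ) (hβ : 0 ≤ β)
    (ν : ℕ → ℝ) (hν : ∀ K, 0 ≤ ν K)
    (h_lim : Tendsto (fun K : ℕ => ν K / (K : ℝ)) atTop (nhds β)) :
    Tendsto
      (fun K : ℕ =>
        - anchorLossR q1 q0 K (ν K) r + ((K : ℝ) * Real.log K) / ((K : ℝ) + ν K))
      atTop
      (nhds ((β / (β + 1)) * Real.log β
        + (β + 1)⁻¹ * ∫ x, Real.log (r x) ∂q1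
        - Real.log (β + ∫ x, r x ∂q0))) := by
  set m := ∫ x, r x ∂q0
  have hβm : β + m ≠ 0 := by
    have : a ≤ m := by
      simpa using integral_mono (integrable_const a)
        (integrable_of_forall_mem_Icc (μ := q0) hr_meas.aestronglyMeasurable
          fun x => ⟨hr_lb x, hr_ub x⟩) hr_lb
    linarith
  have hB₁ := tendsto_integral_log_anchorPartition
    (μ := fun K (i : Fin K) => if (i : ℕ) = 0 then q1 else q0) hν h_lim
    (by simpa only [apply_ite fun μ : Measure X => ∫ x, r x ∂μ] using
      tendsto_sum_ite_val_eq_zero_div (∫ x, r x ∂q1) m)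
    hβm ha hr_meas hr_lb hr_ub
  have hB₀ := tendsto_integral_log_anchorPartition (μ := fun K (_ : Fin K) => q0) hν h_lim
    (by simpa using tendsto_sum_ite_val_eq_zero_div m m) hβm ha hr_meas hr_lb hr_ub
  have h1t : Tendsto (fun K : ℕ => 1 + ν K / K) atTop (nhds (1 + β)) :=
    tendsto_const_nhds.add h_lim
  have hlim := ((h1t.inv₀ (by positivity)).mul
      ((tendsto_const_nhds (x := ∫ x, Real.log (r x) ∂q1)).sub hB₁)).add
    ((((Real.continuous_mul_log.tendsto β).comp h_lim).sub (h_lim.mul hB₀)).div h1t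
      (by positivity))
  convert hlim.congr' ?_ using 2
  · field_simp
    ring
  · filter_upwards [eventually_gt_atTop 0] with K hK
    exact (neg_anchorLossR_add_eq q1 q0 hK (hν K) ha hr_meas hr_lb hr_ub).symm

/-- asymptotic behavior of InfoNCE-anchor. If `ν_K / K → β ≥ 0`, then
`−L_{K;ν_K}(r) + (K log K)/(K + ν_K)` converges to
`(β/(β+1)) log β + (1/(β+1)) ∫ log r dq1 − log(β + ∫ r dq0)`
for any measurable `r` bounded between positive constants. -/
theorem anchorLoss_asymptotic
    {X : Type*} [MeasurableSpace X] (q1 q0 : Measure X)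
    [IsProbabilityMeasure q1] [IsProbabilityMeasure q0]
    (h_ac : q1 ≪ q0)
    (a b : ℝ) (ha : 0 < a)
    (r : X → ℝ) (hr_meas : Measurable r)
    (hr_lb : ∀ x, a ≤ r x) (hr_ub : ∀ x, r x ≤ b)
    (β : ℝ) (hβ : 0 ≤ β)
    (ν : ℕ → ℝ) (hν : ∀ K, 0 ≤ ν K) (hν_pos : 0 < β → ∀ K, 0 < ν K)
    (h_lim : Tendsto (fun K : ℕ => ν K / (K : ℝ)) atTop (nhds β)) :
    Tendsto
      (fun K : ℕ =>
        - anchorLossR q1 q0 K (ν K) r + ((K : ℝ) * Real.log K) / ((K : ℝ) + ν K))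
      atTop
      (nhds ((β / (β + 1)) * Real.log β
        + (β + 1)⁻¹ * ∫ x, Real.log (r x) ∂q1
        - Real.log (β + ∫ x, r x ∂q0))) :=
  anchorLoss_asymptotic_general q1 q0 a b ha r hr_meas hr_lb hr_ub β hβ ν hν h_lim
end

section
/- If a scoring rule λ is proper, then its generating function Ψ^λ is convex on (0,∞)^M; if λ is strictly proper, then Ψ^λ is strictly convex on (0,∞)^M. -/
open scoped BigOperators

/-- The interior of the standard probability simplex in `ℝ^{M+1}`. -/
def posSimplex (M : ℕ) : Set (Fin (M + 1) → ℝ) :=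
  {η | (∀ i, 0 < η i) ∧ ∑ i, η i = 1}

/-- `η(ρ) = (1, ρ_1, …, ρ_M)/(1 + ρ_1 + ⋯ + ρ_M)`. -/
noncomputable def etaOfRho (M : ℕ) (ρ : Fin M → ℝ) : Fin (M + 1) → ℝ :=
  fun i => Fin.cons (α := fun _ => ℝ) (1 : ℝ) ρ i / (1 + ∑ j, ρ j)

/-- The generating function `Ψ^λ(ρ) = −⟨(1, ρ), λ(η(ρ))⟩` of a scoring rule `λ`. -/
noncomputable def genFun (M : ℕ)
    (lam : (Fin (M + 1) → ℝ) → (Fin (M + 1) → ℝ)) (ρ : Fin M → ℝ) : ℝ :=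
  -∑ i, Fin.cons (α := fun _ => ℝ) (1 : ℝ) ρ i * lam (etaOfRho M ρ) i

lemma sPos (M : ℕ) {ρ : Fin M → ℝ} (hρ : ∀ i, 0 < ρ i) : 0 < 1 + ∑ j, ρ j := by
  have : 0 ≤ ∑ j, ρ j := Finset.sum_nonneg fun j _ => (hρ j).le
  linarith

lemma etaMem (M : ℕ) {ρ : Fin M → ℝ} (hρ : ∀ i, 0 < ρ i) :
    etaOfRho M ρ ∈ posSimplex M := by
  constructor
  · intro i
    apply div_pos _ (sPos M hρ)
    refine Fin.cases ?_ ?_ i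
    · simp
    · intro j; simpa using hρ j
  · have hs := sPos M hρ
    simp only [etaOfRho]
    rw [← Finset.sum_div, Fin.sum_cons, div_self hs.ne']

lemma sum_eta_mul (M : ℕ) (ρ : Fin M → ℝ) (c : Fin (M + 1) → ℝ) :
    ∑ i, etaOfRho M ρ i * c i
      = (∑ i, Fin.cons (α := fun _ => ℝ) (1 : ℝ) ρ i * c i) / (1 + ∑ j, ρ j) := by
  simp [etaOfRho, div_mul_eq_mul_div, Finset.sum_div]

lemma etaInj (M : ℕ) {ρ ρ' : Fin M → ℝ} (hρ : ∀ i, 0 < ρ i) (hρ' : ∀ i, 0 < ρ' i)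
    (h : etaOfRho M ρ = etaOfRho M ρ') : ρ = ρ' := by
  have hs := sPos M hρ
  have hs' := sPos M hρ'
  have h0 := congrFun h 0
  simp only [etaOfRho, Fin.cons_zero] at h0
  have hss : (1 + ∑ j, ρ j) = 1 + ∑ j, ρ' j := by
    field_simp at h0
    linarith
  funext j
  have hj := congrFun h j.succ
  simp only [etaOfRho, Fin.cons_succ, hss] at hj
  rw [div_eq_div_iff hs'.ne' hs'.ne'] at hj
  exact mul_right_cancel₀ hs'.ne' hj

lemma keyLe (M : ℕ) (lam : (Fin (M + 1) → ℝ) → (Fin (M + 1) → ℝ))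
    (hp : ∀ ηs ∈ posSimplex M, ∀ ηh ∈ posSimplex M,
        (∑ i, ηs i * lam ηs i) ≤ ∑ i, ηs i * lam ηh i)
    {ρ ρ' : Fin M → ℝ} (hρ : ∀ i, 0 < ρ i) (hρ' : ∀ i, 0 < ρ' i) :
    -(∑ i, Fin.cons (α := fun _ => ℝ) (1 : ℝ) ρ i * lam (etaOfRho M ρ') i)
      ≤ genFun M lam ρ := by
  have h := hp _ (etaMem M hρ) _ (etaMem M hρ')
  rw [sum_eta_mul, sum_eta_mul] at h
  have hs := sPos M hρ
  rw [div_le_div_iff_of_pos_right hs] at h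
  rw [genFun]
  linarith

lemma keyEq (M : ℕ) (lam : (Fin (M + 1) → ℝ) → (Fin (M + 1) → ℝ))
    (hp : ∀ ηs ∈ posSimplex M, ∀ ηh ∈ posSimplex M,
        (∑ i, ηs i * lam ηh i) = (∑ i, ηs i * lam ηs i) → ηh = ηs)
    {ρ ρ' : Fin M → ℝ} (hρ : ∀ i, 0 < ρ i) (hρ' : ∀ i, 0 < ρ' i)
    (heq : -(∑ i, Fin.cons (α := fun _ => ℝ) (1 : ℝ) ρ i * lam (etaOfRho M ρ') i)
      = genFun M lam ρ) : etaOfRho M ρ' = etaOfRho M ρ := by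
  apply hp _ (etaMem M hρ) _ (etaMem M hρ')
  rw [sum_eta_mul, sum_eta_mul]
  rw [genFun] at heq
  have : (∑ i, Fin.cons (α := fun _ => ℝ) (1 : ℝ) ρ i * lam (etaOfRho M ρ') i)
      = ∑ i, Fin.cons (α := fun _ => ℝ) (1 : ℝ) ρ i * lam (etaOfRho M ρ) i := by
    linarith
  rw [this]

lemma consAffine (M : ℕ) {a b : ℝ} (hab : a + b = 1) (x y : Fin M → ℝ)
    (c : Fin (M + 1) → ℝ) :
    ∑ i, Fin.cons (α := fun _ => ℝ) (1 : ℝ) (a • x + b • y) i * c i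
      = a * ∑ i, Fin.cons (α := fun _ => ℝ) (1 : ℝ) x i * c i
        + b * ∑ i, Fin.cons (α := fun _ => ℝ) (1 : ℝ) y i * c i := by
  have key : ∀ i, Fin.cons (α := fun _ => ℝ) (1 : ℝ) (a • x + b • y) i
      = a * Fin.cons (α := fun _ => ℝ) (1 : ℝ) x i
        + b * Fin.cons (α := fun _ => ℝ) (1 : ℝ) y i := by
    intro i
    refine Fin.cases ?_ ?_ i
    · simp [hab]
    · intro j; simp [Pi.add_apply, Pi.smul_apply, smul_eq_mul]
  simp only [key, add_mul, mul_assoc, Finset.sum_add_distrib, ← Finset.mul_sum]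

lemma setConvex (M : ℕ) : Convex ℝ {ρ : Fin M → ℝ | ∀ i, 0 < ρ i} := by
  intro x hx y hy a b ha hb hab
  intro i
  simp only [Pi.add_apply, Pi.smul_apply, smul_eq_mul]
  rcases eq_or_lt_of_le ha with ha' | ha'
  · have hb1 : b = 1 := by linarith
    have := hy i
    rw [← ha', hb1]
    simpa using this
  · have h1 : 0 < a * x i := mul_pos ha' (hx i)
    have h2 : 0 ≤ b * y i := mul_nonneg hb (hy i).le
    linarith

/-- if a scoring rule is proper then its generating function `Ψ^λ` is convex on
`(0,∞)^M`; if strictly proper, then `Ψ^λ` is strictly convex on `(0,∞)^M`. -/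
theorem genFun_convexOn_of_proper
    (M : ℕ) (hM : 1 ≤ M)
    (lam : (Fin (M + 1) → ℝ) → (Fin (M + 1) → ℝ)) :
    ((∀ ηs ∈ posSimplex M, ∀ ηh ∈ posSimplex M,
        (∑ i, ηs i * lam ηs i) ≤ ∑ i, ηs i * lam ηh i) →
      ConvexOn ℝ {ρ : Fin M → ℝ | ∀ i, 0 < ρ i} (genFun M lam))
    ∧ (((∀ ηs ∈ posSimplex M, ∀ ηh ∈ posSimplex M,
          (∑ i, ηs i * lam ηs i) ≤ ∑ i, ηs i * lam ηh i)
        ∧ (∀ ηs ∈ posSimplex M, ∀ ηh ∈ posSimplex M,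
            (∑ i, ηs i * lam ηh i) = (∑ i, ηs i * lam ηs i) → ηh = ηs)) →
      StrictConvexOn ℝ {ρ : Fin M → ℝ | ∀ i, 0 < ρ i} (genFun M lam)) := by
  constructor
  · intro hp
    refine ⟨setConvex M, ?_⟩
    intro x hx y hy a b ha hb hab
    have hz : ∀ i, 0 < (a • x + b • y) i := setConvex M hx hy ha hb hab
    have hA := keyLe M lam hp hx hz
    have hB := keyLe M lam hp hy hz
    have hcalc : genFun M lam (a • x + b • y)
        = a * (-(∑ i, Fin.cons (α := fun _ => ℝ) (1 : ℝ) x i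
              * lam (etaOfRho M (a • x + b • y)) i))
          + b * (-(∑ i, Fin.cons (α := fun _ => ℝ) (1 : ℝ) y i
              * lam (etaOfRho M (a • x + b • y)) i)) := by
      rw [genFun, consAffine M hab]; ring
    simp only [smul_eq_mul]
    rw [hcalc]
    exact add_le_add (mul_le_mul_of_nonneg_left hA ha) (mul_le_mul_of_nonneg_left hB hb)
  · rintro ⟨hp, hsp⟩
    refine ⟨setConvex M, ?_⟩
    intro x hx y hy hxy a b ha hb hab
    have hz : ∀ i, 0 < (a • x + b • y) i := setConvex M hx hy ha.le hb.le hab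
    have hA := keyLe M lam hp hx hz
    have hB := keyLe M lam hp hy hz
    have hcalc : genFun M lam (a • x + b • y)
        = a * (-(∑ i, Fin.cons (α := fun _ => ℝ) (1 : ℝ) x i
              * lam (etaOfRho M (a • x + b • y)) i))
          + b * (-(∑ i, Fin.cons (α := fun _ => ℝ) (1 : ℝ) y i
              * lam (etaOfRho M (a • x + b • y)) i)) := by
      rw [genFun, consAffine M hab]; ring
    simp only [smul_eq_mul]
    rw [hcalc]
    rcases lt_or_eq_of_le hA with hA' | hA'
    · have h1 : a * (-(∑ i, Fin.cons (α := fun _ => ℝ) (1 : ℝ) x i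
          * lam (etaOfRho M (a • x + b • y)) i)) < a * genFun M lam x :=
        mul_lt_mul_of_pos_left hA' ha
      have h2 := mul_le_mul_of_nonneg_left hB hb.le
      linarith
    · rcases lt_or_eq_of_le hB with hB' | hB'
      · have h1 := mul_le_mul_of_nonneg_left hA ha.le
        have h2 : b * (-(∑ i, Fin.cons (α := fun _ => ℝ) (1 : ℝ) y i
            * lam (etaOfRho M (a • x + b • y)) i)) < b * genFun M lam y :=
          mul_lt_mul_of_pos_left hB' hb
        linarith
      · exfalso
        have e1 := keyEq M lam hsp hx hz hA'
        have e2 := keyEq M lam hsp hy hz hB'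
        exact hxy (etaInj M hx hy (e1.symm.trans e2))
end

section
/- Let λ be a scoring rule that extends to a differentiable map on an open neighborhood of Δ° in ℝ^{M+1}. Then for every η ∈ Δ°: λ^{Ψ^λ}(η) = λ(η) − ⟨η, g^λ(η)⟩·𝟙 + g^λ(η), where 𝟙 = (1, 1, …, 1) ∈ ℝ^{M+1}. In particular, if λ is proper (so that g^λ ≡ 0 on Δ°), then λ^{Ψ^λ}(η) = λ(η) for all η ∈ Δ°. -/
open scoped BigOperators

/-- `ρ(η) = (η_1/η_0, …, η_M/η_0)`. -/
noncomputable def rhoOf (M : ℕ) (η : Fin (M + 1) → ℝ) : Fin M → ℝ :=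
  fun z => η z.succ / η 0

/-- The `Ψ`-induced scoring rule: `λ^Ψ_0(η) = ⟨ρ, ∇Ψ(ρ)⟩ − Ψ(ρ)` and
`λ^Ψ_z(η) = −(∇Ψ(ρ))_z` for `z = 1, …, M`, where `ρ = ρ(η)`. -/
noncomputable def inducedRule (M : ℕ) (Ψ : (Fin M → ℝ) → ℝ)
    (η : Fin (M + 1) → ℝ) : Fin (M + 1) → ℝ :=
  Fin.cons
    ((∑ z, rhoOf M η z * fderiv ℝ Ψ (rhoOf M η) (Pi.single z 1)) - Ψ (rhoOf M η))
    (fun z => - fderiv ℝ Ψ (rhoOf M η) (Pi.single z 1))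

/-- `g^λ(η)`: the gradient at `η̂ = η` of the conditional-risk map `η̂ ↦ ⟨η, λ(η̂)⟩`. -/
noncomputable def gscore (M : ℕ)
    (lam : (Fin (M + 1) → ℝ) → (Fin (M + 1) → ℝ)) (η : Fin (M + 1) → ℝ) :
    Fin (M + 1) → ℝ :=
  fun i => fderiv ℝ (fun η' => ∑ j, η j * lam η' j) η (Pi.single i 1)

/-!
Write `ρ = ρ(η)`. Since `(1, ρ) = η / η₀`, we have `Ψ^λ(ρ) = -⟨η, λ(η)⟩ / η₀`, and moving `ρ` in
the direction `e_z` moves `η(ρ)` in the direction `η₀ (e_{z+1} - η)`. The chain rule then gives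
`-∂_z Ψ^λ(ρ) = λ_{z+1}(η) + g_{z+1} - ⟨η, g⟩`, which is the claim at the coordinates `1, …, M`.
The coordinate `0` is then forced: both sides `v` satisfy `⟨η, v⟩ = ⟨η, λ(η)⟩`, since
`⟨η, λ^Ψ(η)⟩ = -η₀ Ψ(ρ)` for every `Ψ`.

If `λ` is proper, `η̂ ↦ ⟨η, λ(η̂)⟩` is minimal at `η` on the simplex, so its gradient `g` vanishes
on the tangent directions `e_i - e_j`; hence `g` is constant, equal to `⟨η, g⟩`, and the correction
terms cancel.
-/

open Filter Topology

lemma Fin.cons_zero_single {α : Type*} [Zero α] {M : ℕ} (z : Fin M) (a : α) :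
    (Fin.cons 0 (Pi.single z a) : Fin (M + 1) → α) = Pi.single z.succ a := by
  ext i
  cases i using Fin.cases with
  | zero => simp [(Fin.succ_ne_zero z).symm]
  | succ y => simp [Pi.single_apply]

lemma Fin.eq_of_succ_eq_of_sum_mul_eq {R : Type*} [CommRing R] [IsDomain R] {n : ℕ}
    {a u w : Fin (n + 1) → R} (h0 : a 0 ≠ 0) (hsucc : ∀ z : Fin n, u z.succ = w z.succ)
    (hsum : ∑ i, a i * u i = ∑ i, a i * w i) : u = w := by
  ext i
  cases i using Fin.cases with
  | zero =>
    simp only [Fin.sum_univ_succ, hsucc, add_left_inj] at hsum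
    exact mul_left_cancel₀ h0 hsum
  | succ z => exact hsucc z

section Risk

variable {n : Type*} [Fintype n] {lam : (n → ℝ) → n → ℝ} {x : n → ℝ}

lemma hasFDerivAt_weighted_sum (y : n → ℝ) (hlam : DifferentiableAt ℝ lam x) :
    HasFDerivAt (fun x' => ∑ j, y j * lam x' j)
      (∑ j, y j • (ContinuousLinearMap.proj j).comp (fderiv ℝ lam x)) x :=
  HasFDerivAt.fun_sum fun j _ => (hasFDerivAt_pi'.1 hlam.hasFDerivAt j).const_mul (y j)

lemma fderiv_weighted_sum_apply (y : n → ℝ) (hlam : DifferentiableAt ℝ lam x) (w : n → ℝ) :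
    fderiv ℝ (fun x' => ∑ j, y j * lam x' j) x w = ∑ j, y j * fderiv ℝ lam x w j := by
  simp [(hasFDerivAt_weighted_sum y hlam).fderiv]

end Risk

section Coordinates

variable {M : ℕ} {η : Fin (M + 1) → ℝ}

lemma one_add_sum_rhoOf (hη : η ∈ posSimplex M) : 1 + ∑ z, rhoOf M η z = (η 0)⁻¹ := by
  have h0 : η 0 ≠ 0 := (hη.1 0).ne'
  have hsum := hη.2
  rw [Fin.sum_univ_succ] at hsum
  simp only [rhoOf, ← Finset.sum_div]
  field_simp
  linarith

lemma cons_one_rhoOf (hη : η ∈ posSimplex M) :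
    (Fin.cons 1 (rhoOf M η) : Fin (M + 1) → ℝ) = (η 0)⁻¹ • η := by
  have h0 : η 0 ≠ 0 := (hη.1 0).ne'
  ext i
  cases i using Fin.cases with
  | zero => simp [h0]
  | succ z => simp [rhoOf, div_eq_inv_mul]

lemma etaOfRho_rhoOf (hη : η ∈ posSimplex M) : etaOfRho M (rhoOf M η) = η := by
  have h0 : η 0 ≠ 0 := (hη.1 0).ne'
  ext i
  rw [etaOfRho, one_add_sum_rhoOf hη, cons_one_rhoOf hη, Pi.smul_apply, smul_eq_mul]
  field_simp

end Coordinates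

section Line

variable {M : ℕ} (ρ v : Fin M → ℝ)

lemma hasDerivAt_cons_one_line (t : ℝ) :
    HasDerivAt (fun t => (Fin.cons (1 : ℝ) (ρ + t • v) : Fin (M + 1) → ℝ))
      (Fin.cons (0 : ℝ) v : Fin (M + 1) → ℝ) t := by
  refine hasDerivAt_pi.2 fun i => ?_
  cases i using Fin.cases with
  | zero => simpa using hasDerivAt_const t (1 : ℝ)
  | succ z => simpa using ((hasDerivAt_id t).mul_const (v z)).const_add (ρ z)

lemma hasDerivAt_etaOfRho_line (hs : 1 + ∑ j, ρ j ≠ 0) :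
    HasDerivAt (fun t : ℝ => etaOfRho M (ρ + t • v))
      ((1 + ∑ j, ρ j)⁻¹ •
        ((Fin.cons (0 : ℝ) v : Fin (M + 1) → ℝ) - (∑ j, v j) • etaOfRho M ρ)) 0 := by
  have hden : HasDerivAt (fun t : ℝ => 1 + ∑ j, (ρ + t • v) j) (∑ j, v j) 0 := by
    simpa [Finset.sum_add_distrib, ← Finset.mul_sum] using
      ((hasDerivAt_id (0 : ℝ)).mul_const (∑ j, v j)).const_add (1 + ∑ j, ρ j)
  refine hasDerivAt_pi.2 fun i => ?_
  refine ((hasDerivAt_pi.1 (hasDerivAt_cons_one_line ρ v 0) i).fun_div hden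
    (by simpa using hs)).congr_deriv ?_
  simp only [zero_smul, add_zero, etaOfRho, Pi.smul_apply, Pi.sub_apply, smul_eq_mul]
  field_simp

lemma differentiableAt_etaOfRho (hs : 1 + ∑ j, ρ j ≠ 0) :
    DifferentiableAt ℝ (etaOfRho M) ρ := by
  unfold etaOfRho
  fun_prop (disch := exact hs)

end Line

section GenFun

variable {M : ℕ} {lam : (Fin (M + 1) → ℝ) → Fin (M + 1) → ℝ} {η : Fin (M + 1) → ℝ}

lemma sum_mul_gscore :
    ∑ i, η i * gscore M lam η i = fderiv ℝ (fun η' => ∑ j, η j * lam η' j) η η := by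
  set L := fderiv ℝ (fun η' => ∑ j, η j * lam η' j) η
  calc ∑ i, η i * gscore M lam η i = L (∑ i, η i • Pi.single i 1) := by
        simp [gscore, L, map_sum, map_smul]
    _ = L η := by
        congr 1
        ext j
        simp [Finset.sum_apply, Pi.single_apply]

lemma one_add_sum_rhoOf_ne_zero (hη : η ∈ posSimplex M) : 1 + ∑ z, rhoOf M η z ≠ 0 := by
  rw [one_add_sum_rhoOf hη]
  exact inv_ne_zero (hη.1 0).ne'

lemma differentiableAt_genFun (hη : η ∈ posSimplex M) (hlam : DifferentiableAt ℝ lam η) :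
    DifferentiableAt ℝ (genFun M lam) (rhoOf M η) := by
  have hcomp : DifferentiableAt ℝ (fun ρ => lam (etaOfRho M ρ)) (rhoOf M η) :=
    DifferentiableAt.comp (g := lam) _ (by rwa [etaOfRho_rhoOf hη])
      (differentiableAt_etaOfRho _ (one_add_sum_rhoOf_ne_zero hη))
  have hcons : DifferentiableAt ℝ (fun ρ => (Fin.cons (1 : ℝ) ρ : Fin (M + 1) → ℝ)) (rhoOf M η) :=
    (differentiableAt_const _).finCons differentiableAt_id
  exact (DifferentiableAt.fun_sum fun i _ =>
    (differentiableAt_pi.1 hcons i).mul (differentiableAt_pi.1 hcomp i)).neg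

lemma hasDerivAt_genFun_line (hη : η ∈ posSimplex M) (hlam : DifferentiableAt ℝ lam η)
    (v : Fin M → ℝ) :
    HasDerivAt (fun t : ℝ => genFun M lam (rhoOf M η + t • v))
      (-(∑ i, (Fin.cons (0 : ℝ) v : Fin (M + 1) → ℝ) i * lam η i)
        - fderiv ℝ (fun η' => ∑ j, η j * lam η' j) η
            ((Fin.cons (0 : ℝ) v : Fin (M + 1) → ℝ) - (∑ j, v j) • η)) 0 := by
  set w : Fin (M + 1) → ℝ := (Fin.cons (0 : ℝ) v : Fin (M + 1) → ℝ) - (∑ j, v j) • η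
  have h0 : η 0 ≠ 0 := (hη.1 0).ne'
  have heta : HasDerivAt (fun t : ℝ => etaOfRho M (rhoOf M η + t • v)) (η 0 • w) 0 := by
    simpa [one_add_sum_rhoOf hη, etaOfRho_rhoOf hη] using
      hasDerivAt_etaOfRho_line (rhoOf M η) v (one_add_sum_rhoOf_ne_zero hη)
  have hlam' : HasDerivAt (fun t : ℝ => lam (etaOfRho M (rhoOf M η + t • v)))
      (fderiv ℝ lam η (η 0 • w)) 0 := by
    refine HasFDerivAt.comp_hasDerivAt (l := lam) _ ?_ heta
    simpa [etaOfRho_rhoOf hη] using hlam.hasFDerivAt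
  have hprod := (HasDerivAt.fun_sum (u := Finset.univ) fun i _ =>
    (hasDerivAt_pi.1 (hasDerivAt_cons_one_line (rhoOf M η) v 0) i).fun_mul
      (hasDerivAt_pi.1 hlam' i)).neg
  refine hprod.congr_deriv ?_
  simp only [zero_smul, add_zero, etaOfRho_rhoOf hη, cons_one_rhoOf hη, map_smul,
    fderiv_weighted_sum_apply η hlam, Finset.sum_add_distrib, Pi.smul_apply, smul_eq_mul]
  field_simp
  ring

lemma fderiv_genFun_rhoOf (hη : η ∈ posSimplex M) (hlam : DifferentiableAt ℝ lam η)
    (v : Fin M → ℝ) :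
    fderiv ℝ (genFun M lam) (rhoOf M η) v =
      -(∑ i, (Fin.cons (0 : ℝ) v : Fin (M + 1) → ℝ) i * lam η i)
        - fderiv ℝ (fun η' => ∑ j, η j * lam η' j) η
            ((Fin.cons (0 : ℝ) v : Fin (M + 1) → ℝ) - (∑ j, v j) • η) := by
  rw [← (differentiableAt_genFun hη hlam).lineDeriv_eq_fderiv]
  exact (hasDerivAt_genFun_line hη hlam v).deriv

lemma inducedRule_genFun_succ (hη : η ∈ posSimplex M) (hlam : DifferentiableAt ℝ lam η)
    (z : Fin M) :
    inducedRule M (genFun M lam) η z.succ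
      = lam η z.succ - (∑ j, η j * gscore M lam η j) + gscore M lam η z.succ := by
  rw [inducedRule, Fin.cons_succ, fderiv_genFun_rhoOf hη hlam, Fin.cons_zero_single,
    map_sub, map_smul, ← sum_mul_gscore]
  simp only [gscore, Pi.single_apply, ite_mul, one_mul, zero_mul, Finset.sum_ite_eq',
    Finset.mem_univ, ↓reduceIte, smul_eq_mul]
  ring

lemma sum_mul_inducedRule (Ψ : (Fin M → ℝ) → ℝ) (h0 : η 0 ≠ 0) :
    ∑ i, η i * inducedRule M Ψ η i = -(η 0 * Ψ (rhoOf M η)) := by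
  simp only [Fin.sum_univ_succ, inducedRule, Fin.cons_zero, Fin.cons_succ, rhoOf, mul_sub,
    Finset.mul_sum]
  field_simp
  rw [Finset.sum_neg_distrib]
  ring

lemma mul_genFun_rhoOf (hη : η ∈ posSimplex M) :
    η 0 * genFun M lam (rhoOf M η) = -∑ i, η i * lam η i := by
  have h0 : η 0 ≠ 0 := (hη.1 0).ne'
  simp only [genFun, cons_one_rhoOf hη, etaOfRho_rhoOf hη, Pi.smul_apply, smul_eq_mul,
    Finset.mul_sum, mul_neg]
  field_simp

end GenFun

lemma inducedRule_genFun_apply {M : ℕ} {lam : (Fin (M + 1) → ℝ) → Fin (M + 1) → ℝ}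
    {η : Fin (M + 1) → ℝ} (hη : η ∈ posSimplex M) (hlam : DifferentiableAt ℝ lam η)
    (i : Fin (M + 1)) :
    inducedRule M (genFun M lam) η i
      = lam η i - (∑ j, η j * gscore M lam η j) + gscore M lam η i := by
  refine congrFun (Fin.eq_of_succ_eq_of_sum_mul_eq (u := inducedRule M (genFun M lam) η)
    (w := fun i => lam η i - (∑ j, η j * gscore M lam η j) + gscore M lam η i)
    (hη.1 0).ne' (inducedRule_genFun_succ hη hlam) ?_) i
  rw [sum_mul_inducedRule _ (hη.1 0).ne', mul_genFun_rhoOf hη]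
  simp only [mul_add, mul_sub, Finset.sum_add_distrib, Finset.sum_sub_distrib, ← Finset.sum_mul,
    hη.2]
  ring

section Proper

variable {M : ℕ} {η : Fin (M + 1) → ℝ}

lemma eventually_add_smul_mem_posSimplex (hη : η ∈ posSimplex M) {u : Fin (M + 1) → ℝ}
    (hu : ∑ i, u i = 0) : ∀ᶠ t in 𝓝 (0 : ℝ), η + t • u ∈ posSimplex M := by
  have hpos : ∀ i, ∀ᶠ t in 𝓝 (0 : ℝ), 0 < η i + t * u i := fun i =>
    Tendsto.eventually_const_lt (by simpa using hη.1 i)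
      ((continuous_const.add (continuous_id.mul continuous_const)).tendsto (0 : ℝ))
  filter_upwards [eventually_all.2 hpos] with t ht
  exact ⟨ht, by simp [Finset.sum_add_distrib, ← Finset.mul_sum, hη.2, hu]⟩

lemma fderiv_eq_zero_of_isLocalMinOn_posSimplex {f : (Fin (M + 1) → ℝ) → ℝ}
    (hη : η ∈ posSimplex M) (hmin : IsLocalMinOn f (posSimplex M) η)
    (hf : DifferentiableAt ℝ f η) {u : Fin (M + 1) → ℝ} (hu : ∑ i, u i = 0) :
    fderiv ℝ f η u = 0 := by
  have hline : Tendsto (fun t : ℝ => η + t • u) (𝓝 0) (𝓝[posSimplex M] η) :=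
    tendsto_nhdsWithin_iff.2 ⟨(by fun_prop : Continuous fun t : ℝ => η + t • u).tendsto' 0 η
      (by simp), eventually_add_smul_mem_posSimplex hη hu⟩
  have hlocal : IsLocalMin (fun t : ℝ => f (η + t • u)) 0 := by
    filter_upwards [hline.eventually hmin] with t ht
    simpa using ht
  rw [← hf.lineDeriv_eq_fderiv]
  exact hlocal.deriv_eq_zero

lemma gscore_eq_of_isLocalMinOn {lam : (Fin (M + 1) → ℝ) → Fin (M + 1) → ℝ}
    (hη : η ∈ posSimplex M) (hlam : DifferentiableAt ℝ lam η)
    (hmin : IsLocalMinOn (fun η' => ∑ j, η j * lam η' j) (posSimplex M) η) (i : Fin (M + 1)) :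
    gscore M lam η i = gscore M lam η 0 := by
  have h := fderiv_eq_zero_of_isLocalMinOn_posSimplex hη hmin
    (hasFDerivAt_weighted_sum η hlam).differentiableAt
    (u := Pi.single i 1 - Pi.single 0 1) (by simp [Finset.sum_sub_distrib])
  rw [map_sub, sub_eq_zero] at h
  exact h

end Proper

theorem inducedRule_genFun_eq_general
    (M : ℕ)
    (lam : (Fin (M + 1) → ℝ) → (Fin (M + 1) → ℝ))
    (U : Set (Fin (M + 1) → ℝ))
    (hΔU : posSimplex M ⊆ U)
    (h_diff : ∀ η ∈ U, DifferentiableAt ℝ lam η) :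
    (∀ η ∈ posSimplex M, ∀ i,
        inducedRule M (genFun M lam) η i
          = lam η i - (∑ j, η j * gscore M lam η j) + gscore M lam η i)
    ∧ ((∀ ηs ∈ posSimplex M, ∀ ηh ∈ posSimplex M,
          (∑ i, ηs i * lam ηs i) ≤ ∑ i, ηs i * lam ηh i) →
        ∀ η ∈ posSimplex M, inducedRule M (genFun M lam) η = lam η) := by
  refine ⟨fun η hη => inducedRule_genFun_apply hη (h_diff η (hΔU hη)), ?_⟩
  intro hproper η hη
  have hlam := h_diff η (hΔU hη)
  have hconst := gscore_eq_of_isLocalMinOn hη hlam (isMinOn_iff.2 (hproper η hη)).localize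
  have hmean : ∑ j, η j * gscore M lam η j = gscore M lam η 0 := by
    simp only [hconst, ← Finset.sum_mul, hη.2, one_mul]
  ext i
  rw [inducedRule_genFun_apply hη hlam, hmean, hconst i]
  ring

/-- `λ^{Ψ^λ}(η) = λ(η) − ⟨η, g^λ(η)⟩·𝟙 + g^λ(η)` on `Δ°`; in particular, if `λ`
is proper then `λ^{Ψ^λ} = λ` on `Δ°`. -/
theorem inducedRule_genFun_eq
    (M : ℕ) (hM : 1 ≤ M)
    (lam : (Fin (M + 1) → ℝ) → (Fin (M + 1) → ℝ))
    (U : Set (Fin (M + 1) → ℝ)) (hU : IsOpen U)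
    (hΔU : posSimplex M ⊆ U)
    (h_diff : ∀ η ∈ U, DifferentiableAt ℝ lam η) :
    (∀ η ∈ posSimplex M, ∀ i,
        inducedRule M (genFun M lam) η i
          = lam η i - (∑ j, η j * gscore M lam η j) + gscore M lam η i)
    ∧ ((∀ ηs ∈ posSimplex M, ∀ ηh ∈ posSimplex M,
          (∑ i, ηs i * lam ηs i) ≤ ∑ i, ηs i * lam ηh i) →
        ∀ η ∈ posSimplex M, inducedRule M (genFun M lam) η = lam η) :=
  inducedRule_genFun_eq_general M lam U hΔU h_diff
end

section
/- Let Ψ : (0,∞)^M → ℝ be differentiable. Then for all η, η* ∈ Δ°: ⟨η*, λ^Ψ(η)⟩ − ⟨η*, λ^Ψ(η*)⟩ = η*_0 · B_Ψ(ρ(η*), ρ(η)). -/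
open scoped BigOperators

/-- Bregman distortion `B_F(u, v) = F(u) − F(v) − ⟨∇F(v), u − v⟩`. -/
noncomputable def bregman {n : ℕ} (F : (Fin n → ℝ) → ℝ) (u v : Fin n → ℝ) : ℝ :=
  F u - F v - fderiv ℝ F v (u - v)

/-- for differentiable `Ψ : (0,∞)^M → ℝ` and all `η, η* ∈ Δ°`,
`⟨η*, λ^Ψ(η)⟩ − ⟨η*, λ^Ψ(η*)⟩ = η*_0 · B_Ψ(ρ(η*), ρ(η))`. -/
theorem regret_inducedRule_eq_weighted_bregman
    (M : ℕ) (hM : 1 ≤ M)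
    (Ψ : (Fin M → ℝ) → ℝ)
    (hΨ : ∀ ρ : Fin M → ℝ, (∀ i, 0 < ρ i) → DifferentiableAt ℝ Ψ ρ) :
    ∀ η ∈ posSimplex M, ∀ ηs ∈ posSimplex M,
      (∑ i, ηs i * inducedRule M Ψ η i) - (∑ i, ηs i * inducedRule M Ψ ηs i)
        = ηs 0 * bregman Ψ (rhoOf M ηs) (rhoOf M η) := by
  intro η hη ηs hηs
  obtain ⟨hsp, -⟩ := hηs
  set ρ := rhoOf M η with hρ
  set σ := rhoOf M ηs with hσ
  set L := fderiv ℝ Ψ ρ with hL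
  set Ls := fderiv ℝ Ψ σ with hLs
  have hs0 : ηs 0 ≠ 0 := (hsp 0).ne'
  have hrep : ∀ z : Fin M, ηs z.succ = ηs 0 * σ z := by
    intro z
    simp only [hσ, rhoOf]
    field_simp
  have hdecomp : σ - ρ = ∑ z, (σ z - ρ z) • (Pi.single z 1 : Fin M → ℝ) := by
    funext j
    simp [Finset.sum_apply, Pi.single_apply]
  have hsum : L (σ - ρ) = ∑ z, (σ z - ρ z) * L (Pi.single z 1) := by
    rw [hdecomp, map_sum]
    simp [smul_eq_mul]
  simp only [Fin.sum_univ_succ, inducedRule, Fin.cons_zero, Fin.cons_succ, bregman,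
    ← hρ, ← hσ, ← hL, ← hLs]
  rw [hsum]
  simp only [hrep, mul_neg, mul_assoc, Finset.sum_neg_distrib, ← Finset.mul_sum,
    sub_mul, Finset.sum_sub_distrib]
  ring
end
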